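/- arXiv:math/0702485 — 6 statements merged into one kernel-verified Lean document; each statement's English description precedes it below -/
import Mathlib

section
/- Let d ∈ (0,1/2) and suppose the coefficients satisfy the long-memory decay conditions. Then for every δ > 0 there is a constant C such that for all k ≥ 1, the truncated Wiener–Kolmogorov prediction error satisfies | ‖X_{k+1} + Σ_{j=1}^k a_j X_{k+1−j}‖² − σ_ε² | ≤ C k^{−1+δ}. -/
set_option maxHeartbeats 1600000

open scoped RealInnerProductSpace BigOperators

private lemma sum_Icc_eq_range' (f : ℕ → ℝ) (n : ℕ) :
    ∑ s ∈ Finset.Icc 1 n, f s = ∑ i ∈ Finset.range n, f (i+1) := by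
  induction n with
  | zero => simp
  | succ m ih => rw [Finset.sum_Icc_succ_top (by omega), Finset.sum_range_succ, ih]



private lemma exp_aux {t x : ℝ} (ht : 0 < t) (hx : 2 ≤ x) :
    t * x ^ (-t-1) ≤ (x-1) ^ (-t) - x ^ (-t) := by
  have hx0 : (0:ℝ) < x := by linarith
  have hx1 : (0:ℝ) < x - 1 := by linarith
  have hy0 : (0:ℝ) < (x-1)/x := by positivity
  have hkey : 1 + t/x ≤ ((x-1)/x) ^ (-t) := by
    rw [Real.rpow_def_of_pos hy0]
    have hlog : Real.log ((x-1)/x) ≤ -(1/x) := by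
      have h := Real.log_le_sub_one_of_pos hy0
      have hx' : (x-1)/x - 1 = -(1/x) := by field_simp; ring
      linarith [hx' ▸ h]
    have h1 : t/x ≤ Real.log ((x-1)/x) * (-t) := by
      have h2 := mul_le_mul_of_nonneg_right hlog (le_of_lt ht)
      have e : (-(1/x)) * t = -(t/x) := by ring
      have e2 : Real.log ((x-1)/x) * (-t) = -(Real.log ((x-1)/x) * t) := by ring
      linarith [e ▸ h2]
    have h2 := Real.add_one_le_exp (Real.log ((x-1)/x) * (-t))
    linarith
  have hsplit : (x-1) ^ (-t) = ((x-1)/x) ^ (-t) * x ^ (-t) := by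
    rw [Real.div_rpow (le_of_lt hx1) (le_of_lt hx0)]
    have := (Real.rpow_pos_of_pos hx0 (-t)).ne'
    field_simp
  have hxp : (0:ℝ) < x ^ (-t) := Real.rpow_pos_of_pos hx0 _
  have hxm : x ^ (-t-1) = x ^ (-t) / x := by
    rw [show -t-1 = -t - 1 from rfl, Real.rpow_sub hx0, Real.rpow_one]
  rw [hxm, hsplit]
  have h3 : (1 + t/x) * x ^ (-t) ≤ ((x-1)/x) ^ (-t) * x ^ (-t) :=
    mul_le_mul_of_nonneg_right hkey (le_of_lt hxp)
  have hxx : (1 + t/x) * x ^ (-t) = x ^ (-t) + t * (x ^ (-t) / x) := by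
    field_simp
  linarith [hxx ▸ h3]

private lemma pow_diff_lower {p x : ℝ} (hp : 0 < p) (hp1 : p ≤ 1) (hx : 1 ≤ x) :
    (p/2) * x^(p-1) ≤ x^p - (x-1)^p := by
  have hx0 : (0:ℝ) < x := by linarith
  have hx1 : (0:ℝ) ≤ x - 1 := by linarith
  have hpx : (0:ℝ) < x + p := by linarith
  have h1 : ((x-1)/x) ^ p ≤ Real.exp (-(p/x)) := by
    rcases eq_or_lt_of_le hx1 with h | h
    · rw [← h]; simp only [zero_div]
      rw [Real.zero_rpow (ne_of_gt hp)]
      positivity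
    · have hy0 : (0:ℝ) < (x-1)/x := by positivity
      rw [Real.rpow_def_of_pos hy0]
      apply Real.exp_le_exp.mpr
      have hlog : Real.log ((x-1)/x) ≤ -(1/x) := by
        have h := Real.log_le_sub_one_of_pos hy0
        have hx' : (x-1)/x - 1 = -(1/x) := by field_simp; ring
        linarith [hx' ▸ h]
      calc Real.log ((x-1)/x) * p ≤ (-(1/x)) * p :=
              mul_le_mul_of_nonneg_right hlog (le_of_lt hp)
        _ = -(p/x) := by ring
  have h2 : Real.exp (-(p/x)) ≤ x/(x+p) := by
    have h3 := Real.add_one_le_exp (p/x)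
    have h4 : (x+p)/x ≤ Real.exp (p/x) := by
      have e : (x+p)/x = p/x + 1 := by field_simp; ring
      linarith [e ▸ h3]
    have h5 : ((x+p)/x) > 0 := by positivity
    have h6 := inv_anti₀ h5 h4
    rw [Real.exp_neg]
    calc (Real.exp (p/x))⁻¹ ≤ ((x+p)/x)⁻¹ := h6
      _ = x/(x+p) := by rw [inv_div]
  have hxp : (0:ℝ) < x^p := Real.rpow_pos_of_pos hx0 _
  have hsplit : (x-1)^p = ((x-1)/x)^p * x^p := by
    rw [Real.div_rpow hx1 hx0.le]
    have := hxp.ne'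
    field_simp
  have hb : (x-1)^p ≤ (x/(x+p)) * x^p := by
    rw [hsplit]; exact mul_le_mul_of_nonneg_right (h1.trans h2) hxp.le
  have e1 : x^p - x/(x+p)*x^p = x^p * (p/(x+p)) := by field_simp; ring
  have e2 : (p/2)*x^(p-1) ≤ x^p * (p/(x+p)) := by
    rw [Real.rpow_sub hx0, Real.rpow_one]
    have e3 : (p/2)*(x^p/x) = x^p * (p/(2*x)) := by ring
    rw [e3]
    apply mul_le_mul_of_nonneg_left _ hxp.le
    apply div_le_div_of_nonneg_left hp.le hpx (by linarith)
  linarith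

private lemma tail_summable {c : ℝ} (hc : c < -1) (k : ℕ) :
    Summable (fun i : ℕ => ((k:ℝ)+1+i)^c) := by
  have h := Real.summable_nat_rpow.mpr hc
  have h2 := (summable_nat_add_iff (k+1)).mpr h
  refine h2.congr fun n => ?_
  push_cast
  ring_nf

private lemma tail_bound {c : ℝ} (hc : c < -1) {k : ℕ} (hk : 1 ≤ k) :
    ∑' i : ℕ, ((k:ℝ)+1+i)^c ≤ (-c-1)⁻¹ * (k:ℝ)^(c+1) := by
  have ht : (0:ℝ) < -c-1 := by linarith
  apply Summable.tsum_le_of_sum_range_le (tail_summable hc k)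
  intro n
  have key : ∀ i : ℕ, ((k:ℝ)+1+i)^c ≤ (-c-1)⁻¹ * (((k:ℝ)+i)^(c+1) - ((k:ℝ)+(i+1))^(c+1)) := by
    intro i
    have hx : (2:ℝ) ≤ (k:ℝ)+1+i := by
      have : (1:ℝ) ≤ (k:ℝ) := by exact_mod_cast hk
      push_cast; linarith [Nat.cast_nonneg (α := ℝ) i]
    have h := exp_aux ht hx
    rw [show -(-c-1) = c+1 from by ring] at h
    rw [show c+1-1 = c from by ring] at h
    have e3 : (k:ℝ)+1+i - 1 = (k:ℝ)+i := by ring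
    have e4 : (k:ℝ)+(i+1) = (k:ℝ)+1+i := by push_cast; ring
    rw [e3] at h
    rw [e4]
    calc ((k:ℝ)+1+i)^c = (-c-1)⁻¹ * ((-c-1) * ((k:ℝ)+1+i)^c) := by
          field_simp
      _ ≤ (-c-1)⁻¹ * (((k:ℝ)+i)^(c+1) - ((k:ℝ)+1+i)^(c+1)) := by
          apply mul_le_mul_of_nonneg_left _ (inv_nonneg.mpr ht.le)
          linarith
  calc ∑ i ∈ Finset.range n, ((k:ℝ)+1+i)^c
      ≤ ∑ i ∈ Finset.range n, (-c-1)⁻¹ * (((k:ℝ)+i)^(c+1) - ((k:ℝ)+(i+1))^(c+1)) :=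
        Finset.sum_le_sum fun i _ => key i
    _ = ∑ i ∈ Finset.range n, (-c-1)⁻¹ *
          ((fun j : ℕ => ((k:ℝ)+j)^(c+1)) i - (fun j : ℕ => ((k:ℝ)+j)^(c+1)) (i+1)) := by
        apply Finset.sum_congr rfl
        intro i _
        simp only []
        congr 2
        push_cast; ring
    _ = (-c-1)⁻¹ * (((k:ℝ)+(0:ℕ))^(c+1) - ((k:ℝ)+(n:ℕ))^(c+1)) := by
        rw [← Finset.mul_sum]
        congr 1
        exact Finset.sum_range_sub' (fun j => ((k:ℝ)+j)^(c+1)) n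
    _ ≤ (-c-1)⁻¹ * (k:ℝ)^(c+1) := by
        apply mul_le_mul_of_nonneg_left _ (inv_nonneg.mpr ht.le)
        have h1 : (0:ℝ) ≤ ((k:ℝ)+(n:ℕ))^(c+1) := Real.rpow_nonneg (by positivity) _
        simp only [Nat.cast_zero, add_zero]
        linarith

private lemma partial_bound {q : ℝ} (hq : -1 < q) (hq1 : q ≤ 0) (n : ℕ) :
    ∑ s ∈ Finset.Icc 1 n, ((s:ℝ))^q ≤ (2/(q+1)) * (n:ℝ)^(q+1) := by
  have hp : (0:ℝ) < q+1 := by linarith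
  have hp1 : q+1 ≤ 1 := by linarith
  have key : ∀ i : ℕ, ((i:ℝ)+1)^q ≤ (2/(q+1)) * (((i:ℝ)+1)^(q+1) - ((i:ℝ))^(q+1)) := by
    intro i
    have hx : (1:ℝ) ≤ (i:ℝ)+1 := by linarith [Nat.cast_nonneg (α := ℝ) i]
    have h := pow_diff_lower hp hp1 hx
    have e1 : q+1-1 = q := by ring
    have e2 : (i:ℝ)+1-1 = (i:ℝ) := by ring
    rw [e1, e2] at h
    calc ((i:ℝ)+1)^q = (2/(q+1)) * (((q+1)/2) * ((i:ℝ)+1)^q) := by field_simp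
      _ ≤ (2/(q+1)) * (((i:ℝ)+1)^(q+1) - ((i:ℝ))^(q+1)) := by
          apply mul_le_mul_of_nonneg_left _ (div_nonneg (by norm_num) hp.le)
          linarith
  have hIcc : ∑ s ∈ Finset.Icc 1 n, ((s:ℝ))^q = ∑ i ∈ Finset.range n, ((i:ℝ)+1)^q := by
    induction n with
    | zero => simp
    | succ m ih =>
        rw [Finset.sum_Icc_succ_top (by omega), Finset.sum_range_succ, ih]
        congr 1
        push_cast; ring
  rw [hIcc]
  calc ∑ i ∈ Finset.range n, ((i:ℝ)+1)^q
      ≤ ∑ i ∈ Finset.range n, (2/(q+1)) * (((i:ℝ)+1)^(q+1) - ((i:ℝ))^(q+1)) :=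
        Finset.sum_le_sum fun i _ => key i
    _ = (2/(q+1)) * ((n:ℝ)^(q+1) - ((0:ℕ):ℝ)^(q+1)) := by
        rw [← Finset.mul_sum]
        congr 1
        rw [show ((n:ℝ))^(q+1) - ((0:ℕ):ℝ)^(q+1) = ((n:ℕ):ℝ)^(q+1) - ((0:ℕ):ℝ)^(q+1) from by norm_num]
        have := Finset.sum_range_sub (fun i => ((i:ℝ))^(q+1)) n
        simp only [Nat.cast_zero] at this ⊢
        rw [← this]
        apply Finset.sum_congr rfl
        intro i _
        congr 2
        push_cast; ring
    _ ≤ (2/(q+1)) * (n:ℝ)^(q+1) := by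
        apply mul_le_mul_of_nonneg_left _ (div_nonneg (by norm_num) hp.le)
        have : (0:ℝ) ≤ ((0:ℕ):ℝ)^(q+1) := Real.rpow_nonneg (by positivity) _
        linarith

private lemma summable_maxrpow {c : ℝ} (hc : c < -1) :
    Summable (fun s : ℕ => (max (s:ℝ) 1)^c) := by
  rw [← summable_nat_add_iff 1]
  have h := tail_summable hc 0
  refine h.congr fun n => ?_
  have : (max ((n:ℝ)+1) 1) = (n:ℝ)+1 := by
    apply max_eq_left
    linarith [Nat.cast_nonneg (α := ℝ) n]
  push_cast
  rw [this]
  ring_nf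


-- helper: Icc sums as range sums
private lemma rho_bound (b : ℕ → ℝ) (B η : ℝ) (hB : 1 ≤ B) (hη1 : -1 < η) (hη2 : 2*η < -1)
    (hbb : ∀ s : ℕ, |b s| ≤ B * (max (s:ℝ) 1)^η)
 :
    ∀ r : ℕ, ∑' s : ℕ, |b s| * |b (s+r)| ≤
      (B^2*(2 + 2/(η+1) + (-(2*η)-1)⁻¹)) * (max (r:ℝ) 1)^(2*η+1) := by
  have hη0 : η < 0 := by linarith
  have hηp : 0 < η + 1 := by linarith
  have hCA : (0:ℝ) ≤ (-(2*η)-1)⁻¹ := inv_nonneg.mpr (by linarith)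
  set vb : ℕ → ℝ := fun s => B * (max (s:ℝ) 1)^η with hvb
  have hmax1 : ∀ s : ℕ, (1:ℝ) ≤ max (s:ℝ) 1 := fun s => le_max_right _ _
  have hvbnn : ∀ s, 0 ≤ vb s := by
    intro s
    have : (0:ℝ) < max (s:ℝ) 1 := lt_of_lt_of_le one_pos (hmax1 s)
    positivity
  have hanti : ∀ s t : ℕ, s ≤ t → vb t ≤ vb s := by
    intro s t hst
    apply mul_le_mul_of_nonneg_left _ (by linarith)
    apply Real.rpow_le_rpow_of_nonpos (lt_of_lt_of_le one_pos (hmax1 s))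
      (max_le_max (by exact_mod_cast hst) le_rfl) hη0.le
  have hvb_le : ∀ s, vb s ≤ B := by
    intro s
    have h := hanti 0 s (Nat.zero_le s)
    simpa [vb] using h
  have hsq : ∀ s : ℕ, vb s * vb s = B^2 * (max (s:ℝ) 1)^(2*η) := by
    intro s
    have hpos : (0:ℝ) < max (s:ℝ) 1 := lt_of_lt_of_le one_pos (hmax1 s)
    rw [show (2:ℝ)*η = η + η by ring, Real.rpow_add hpos]
    ring
  have hGsum : ∀ r : ℕ, Summable (fun s : ℕ => vb s * vb (s+r)) := by
    intro r
    apply Summable.of_nonneg_of_le (fun s => mul_nonneg (hvbnn s) (hvbnn _))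
      (fun s => ?_) (((summable_maxrpow hη2).mul_left (B^2)))
    calc vb s * vb (s+r) ≤ vb s * vb s :=
          mul_le_mul_of_nonneg_left (hanti s (s+r) (by omega)) (hvbnn s)
      _ = B^2 * (max (s:ℝ) 1)^(2*η) := hsq s
  have habs_sum : ∀ r : ℕ, Summable (fun s : ℕ => |b s| * |b (s+r)|) := by
    intro r
    apply Summable.of_nonneg_of_le (fun s => mul_nonneg (abs_nonneg _) (abs_nonneg _))
      (fun s => ?_) (hGsum r)
    exact mul_le_mul (hbb s) (hbb (s+r)) (abs_nonneg _) (hvbnn s)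
  intro r
  have step1 : ∑' s : ℕ, |b s| * |b (s+r)| ≤ ∑' s : ℕ, vb s * vb (s+r) :=
    Summable.tsum_le_tsum (fun s => mul_le_mul (hbb s) (hbb (s+r)) (abs_nonneg _) (hvbnn s))
      (habs_sum r) (hGsum r)
  refine step1.trans ?_
  rcases Nat.eq_zero_or_pos r with hr | hr
  · subst hr
    have hmax0 : (max ((0:ℕ):ℝ) 1) = 1 := by norm_num
    rw [hmax0, Real.one_rpow, mul_one]
    -- tsum vb s * vb s ≤ B^2 * (2 + CA)
    have h1 : ∑' s : ℕ, vb s * vb (s+0) ≤ ∑' s : ℕ, B^2 * (max (s:ℝ) 1)^(2*η) := by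
      apply Summable.tsum_le_tsum (fun s => ?_) (hGsum 0) ((summable_maxrpow hη2).mul_left _)
      rw [Nat.add_zero, hsq s]
    refine h1.trans ?_
    rw [tsum_mul_left]
    have hsplit := Summable.sum_add_tsum_nat_add (f := fun s : ℕ => (max (s:ℝ) 1)^(2*η)) 2
      (summable_maxrpow hη2)
    have htail : ∑' (i : ℕ), (max ((i+2:ℕ):ℝ) 1)^(2*η) ≤ (-(2*η)-1)⁻¹ := by
      have : ∀ i : ℕ, (max ((i+2:ℕ):ℝ) 1)^(2*η) = (((1:ℕ):ℝ)+1+i)^(2*η) := by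
        intro i
        have : (max ((i+2:ℕ):ℝ) 1) = ((1:ℕ):ℝ)+1+i := by
          rw [max_eq_left]; · push_cast; ring
          · push_cast; linarith [Nat.cast_nonneg (α := ℝ) i]
        rw [this]
      rw [tsum_congr this]
      have := tail_bound hη2 (le_refl 1)
      simpa using this
    have hfin : ∑ s ∈ Finset.range 2, (max ((s:ℕ):ℝ) 1)^(2*η) = 2 := by
      norm_num [Finset.sum_range_succ]
    calc B^2 * ∑' s : ℕ, (max (s:ℝ) 1)^(2*η)
        = B^2 * (∑ s ∈ Finset.range 2, (max ((s:ℕ):ℝ) 1)^(2*η)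
            + ∑' (i : ℕ), (max ((i+2:ℕ):ℝ) 1)^(2*η)) := by rw [hsplit]
      _ ≤ B^2 * (2 + (-(2*η)-1)⁻¹) := by
          apply mul_le_mul_of_nonneg_left _ (by positivity)
          rw [hfin]
          linarith
      _ ≤ B^2*(2 + 2/(η+1) + (-(2*η)-1)⁻¹) := by
          have : (0:ℝ) ≤ 2/(η+1) := by positivity
          nlinarith [sq_nonneg B]
  · -- r ≥ 1
    have hr1 : (1:ℝ) ≤ (r:ℝ) := by exact_mod_cast hr
    have hrpos : (0:ℝ) < r := by linarith
    have hmaxr : (max (r:ℝ) 1) = (r:ℝ) := max_eq_left hr1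
    rw [hmaxr]
    have hsplit := Summable.sum_add_tsum_nat_add (f := fun s : ℕ => vb s * vb (s+r)) (r+1) (hGsum r)
    rw [← hsplit]
    have hrnn : (0:ℝ) ≤ (r:ℝ)^(2*η+1) := Real.rpow_nonneg hrpos.le _
    have hrθ : (r:ℝ)^η * (r:ℝ)^(η+1) = (r:ℝ)^(2*η+1) := by
      rw [← Real.rpow_add hrpos]; congr 1; ring
    have hfin : ∑ s ∈ Finset.range (r+1), vb s * vb (s+r)
        ≤ B^2 * (r:ℝ)^(2*η+1) + B^2*(2/(η+1)) * (r:ℝ)^(2*η+1) := by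
      rw [Finset.sum_range_succ']
      have h0 : vb 0 * vb (0+r) ≤ B^2 * (r:ℝ)^(2*η+1) := by
        have e0 : vb 0 = B := by simp [vb]
        have er : vb (0+r) = B * (r:ℝ)^η := by
          simp only [Nat.zero_add, vb]; rw [hmaxr]
        rw [e0, er]
        have h2 : (r:ℝ)^η ≤ (r:ℝ)^(2*η+1) :=
          Real.rpow_le_rpow_of_exponent_le hr1 (by linarith)
        nlinarith [Real.rpow_nonneg (le_of_lt hrpos) η]
      have hterm : ∀ i : ℕ, vb (i+1) * vb ((i+1)+r)
          ≤ B^2 * (r:ℝ)^η * (((i+1:ℕ)):ℝ)^η := by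
        intro i
        have e1 : vb (i+1) = B * ((i+1:ℕ):ℝ)^η := by
          simp only [vb]
          congr 1
          rw [max_eq_left]
          push_cast; linarith [Nat.cast_nonneg (α := ℝ) i]
        have e2 : vb ((i+1)+r) ≤ B * (r:ℝ)^η := by
          have h3 := hanti r ((i+1)+r) (by omega)
          rwa [show vb r = B * (r:ℝ)^η by simp only [vb]; rw [hmaxr]] at h3
        calc vb (i+1) * vb ((i+1)+r) ≤ (B * ((i+1:ℕ):ℝ)^η) * (B * (r:ℝ)^η) := by
              rw [e1]
              exact mul_le_mul_of_nonneg_left e2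
                (mul_nonneg (by linarith) (Real.rpow_nonneg (Nat.cast_nonneg _) _))
          _ = B^2 * (r:ℝ)^η * (((i+1:ℕ)):ℝ)^η := by push_cast; ring
      have h1 : ∑ i ∈ Finset.range r, vb (i+1) * vb ((i+1)+r)
          ≤ B^2*(2/(η+1)) * (r:ℝ)^(2*η+1) := by
        calc ∑ i ∈ Finset.range r, vb (i+1) * vb ((i+1)+r)
            ≤ ∑ i ∈ Finset.range r, B^2 * (r:ℝ)^η * (((i+1:ℕ)):ℝ)^η :=
              Finset.sum_le_sum fun i _ => hterm i
          _ = B^2 * (r:ℝ)^η * ∑ i ∈ Finset.range r, (((i+1:ℕ)):ℝ)^η := by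
              rw [Finset.mul_sum]
          _ = B^2 * (r:ℝ)^η * ∑ s ∈ Finset.Icc 1 r, ((s:ℕ):ℝ)^η := by
              rw [sum_Icc_eq_range' (fun s => ((s:ℕ):ℝ)^η) r]
          _ ≤ B^2 * (r:ℝ)^η * ((2/(η+1)) * (r:ℝ)^(η+1)) := by
              apply mul_le_mul_of_nonneg_left (partial_bound hη1 hη0.le r)
              have : (0:ℝ) ≤ (r:ℝ)^η := Real.rpow_nonneg hrpos.le _
              nlinarith [sq_nonneg B]
          _ = B^2*(2/(η+1)) * (r:ℝ)^(2*η+1) := by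
              rw [← hrθ]; ring
      linarith
    have htail : ∑' t : ℕ, vb (t+(r+1)) * vb ((t+(r+1))+r)
        ≤ B^2 * (-(2*η)-1)⁻¹ * (r:ℝ)^(2*η+1) := by
      have hbase : ∀ t : ℕ, (0:ℝ) < (r:ℝ)+1+t := by
        intro t; have := Nat.cast_nonneg (α := ℝ) t; linarith
      have hterm : ∀ t : ℕ, vb (t+(r+1)) * vb ((t+(r+1))+r)
          ≤ B^2 * ((r:ℝ)+1+t)^(2*η) := by
        intro t
        have e1 : vb (t+(r+1)) = B * ((r:ℝ)+1+t)^η := by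
          simp only [vb]
          congr 1
          rw [max_eq_left]
          · push_cast; ring
          · push_cast; linarith [Nat.cast_nonneg (α := ℝ) t, Nat.cast_nonneg (α := ℝ) r]
        have e2 : vb ((t+(r+1))+r) ≤ vb (t+(r+1)) := hanti _ _ (by omega)
        calc vb (t+(r+1)) * vb ((t+(r+1))+r) ≤ vb (t+(r+1)) * vb (t+(r+1)) :=
              mul_le_mul_of_nonneg_left e2 (hvbnn _)
          _ = B^2 * ((r:ℝ)+1+t)^(2*η) := by
              rw [e1, show (2:ℝ)*η = η + η by ring, Real.rpow_add (hbase t)]; ring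
      have hs1 : Summable (fun t : ℕ => vb (t+(r+1)) * vb ((t+(r+1))+r)) :=
        (summable_nat_add_iff (r+1)).mpr (hGsum r)
      have hs2 : Summable (fun t : ℕ => B^2 * ((r:ℝ)+1+t)^(2*η)) :=
        (tail_summable hη2 r).mul_left _
      calc ∑' t : ℕ, vb (t+(r+1)) * vb ((t+(r+1))+r)
          ≤ ∑' t : ℕ, B^2 * ((r:ℝ)+1+t)^(2*η) := Summable.tsum_le_tsum hterm hs1 hs2
        _ = B^2 * ∑' t : ℕ, ((r:ℝ)+1+t)^(2*η) := tsum_mul_left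
        _ ≤ B^2 * ((-(2*η)-1)⁻¹ * (r:ℝ)^(2*η+1)) := by
            apply mul_le_mul_of_nonneg_left (tail_bound hη2 hr) (by positivity)
        _ = B^2 * (-(2*η)-1)⁻¹ * (r:ℝ)^(2*η+1) := by ring
    have hfinal : (0:ℝ) ≤ (r:ℝ)^(2*η+1) := Real.rpow_nonneg hrpos.le _
    nlinarith [sq_nonneg B]


private lemma core_summable (w : ℕ → ℝ) (K θ : ℝ) (hK : 0 ≤ K) (hθ0 : θ ≤ 0)
    (hwnn : ∀ l, 0 ≤ w l) (hwsum : Summable w) (i : ℕ) :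
    Summable (fun s : ℕ => w (i+s) * (K * (max (s:ℝ) 1)^θ)) := by
  have hsh : Summable (fun s : ℕ => w (i+s)) :=
    ((summable_nat_add_iff i).mpr hwsum).congr (fun s => by rw [Nat.add_comm])
  apply Summable.of_nonneg_of_le (fun s => ?_) (fun s => ?_) (hsh.mul_left K)
  · have h1 : (0:ℝ) ≤ (max (s:ℝ) 1)^θ :=
      Real.rpow_nonneg (le_trans zero_le_one (le_max_right _ _)) _
    exact mul_nonneg (hwnn _) (mul_nonneg hK h1)
  · have h1 : (max (s:ℝ) 1)^θ ≤ 1 :=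
      Real.rpow_le_one_of_one_le_of_nonpos (le_max_right _ _) hθ0
    have h2 : K * (max (s:ℝ) 1)^θ ≤ K * 1 := mul_le_mul_of_nonneg_left h1 hK
    calc w (i+s) * (K * (max (s:ℝ) 1)^θ) ≤ w (i+s) * (K * 1) :=
          mul_le_mul_of_nonneg_left h2 (hwnn _)
      _ = K * w (i+s) := by ring

private lemma core_bound (w : ℕ → ℝ) (A K α θ : ℝ) (k : ℕ) (hk : 1 ≤ k)
    (hA : 0 ≤ A) (hK : 0 ≤ K)
    (hα : α ≤ 0) (hθ0 : θ ≤ 0) (hθ1 : -1 < θ) (hαθ : α + θ < -1)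
    (hwnn : ∀ l, 0 ≤ w l) (hwsum : Summable w)
    (hw : ∀ l : ℕ, w l ≤ A * ((k:ℝ)+1+l)^α) :
    ∀ i : ℕ, ∑' s : ℕ, w (i+s) * (K * (max (s:ℝ) 1)^θ) ≤
      (A*K*(1 + 2/(θ+1) + (-(α+θ)-1)⁻¹)) * ((k:ℝ)+1+i)^(α+θ+1) := by
  intro i
  have hθp : (0:ℝ) < θ + 1 := by linarith
  set N : ℕ := k+1+i with hN
  have hN1 : 1 ≤ N := by omega
  have hjr : ((N:ℕ):ℝ) = (k:ℝ)+1+i := by simp only [hN]; push_cast; ring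
  set jr : ℝ := (k:ℝ)+1+i with hjrdef
  have hj0 : (0:ℝ) < jr := by
    have := Nat.cast_nonneg (α := ℝ) k
    have := Nat.cast_nonneg (α := ℝ) i
    simp only [hjrdef]; linarith
  have hj1 : (1:ℝ) ≤ jr := by
    have := Nat.cast_nonneg (α := ℝ) k
    have := Nat.cast_nonneg (α := ℝ) i
    simp only [hjrdef]; linarith
  have hF : Summable (fun s : ℕ => w (i+s) * (K * (max (s:ℝ) 1)^θ)) :=
    core_summable w K θ hK hθ0 hwnn hwsum i
  have hmaxnn : ∀ s : ℕ, (0:ℝ) ≤ (max (s:ℝ) 1)^θ :=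
    fun s => Real.rpow_nonneg (le_trans zero_le_one (le_max_right _ _)) _
  -- termwise bound for all s : w (i+s) ≤ A * jr^α
  have hwb : ∀ s : ℕ, w (i+s) ≤ A * jr^α := by
    intro s
    refine (hw (i+s)).trans ?_
    apply mul_le_mul_of_nonneg_left _ hA
    apply Real.rpow_le_rpow_of_nonpos hj0 _ hα
    push_cast
    simp only [hjrdef]
    linarith [Nat.cast_nonneg (α := ℝ) s]
  have hrpow_add : jr^α * jr^(θ+1) = jr^(α+θ+1) := by
    rw [← Real.rpow_add hj0]; congr 1; ring
  have hjmono : jr^α ≤ jr^(α+θ+1) :=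
    Real.rpow_le_rpow_of_exponent_le hj1 (by linarith)
  -- Part A : finite sum over range (N+1)
  have hsum_max : ∑ s ∈ Finset.range (N+1), (max (s:ℝ) 1)^θ
      ≤ 1 + (2/(θ+1)) * jr^(θ+1) := by
    rw [Finset.sum_range_succ']
    have h0 : (max ((0:ℕ):ℝ) 1)^θ = 1 := by norm_num
    have hterm : ∀ m : ℕ, (max ((m+1:ℕ):ℝ) 1)^θ = ((m+1:ℕ):ℝ)^θ := by
      intro m; congr 1
      rw [max_eq_left]
      push_cast; linarith [Nat.cast_nonneg (α := ℝ) m]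
    have heq : ∑ m ∈ Finset.range N, (max ((m+1:ℕ):ℝ) 1)^θ
        = ∑ s ∈ Finset.Icc 1 N, ((s:ℕ):ℝ)^θ := by
      rw [sum_Icc_eq_range' (fun s => ((s:ℕ):ℝ)^θ) N]
      exact Finset.sum_congr rfl fun m _ => hterm m
    rw [h0, heq]
    have := partial_bound hθ1 hθ0 N
    rw [hjr] at this
    linarith
  have hpartA : ∑ s ∈ Finset.range (N+1), w (i+s) * (K * (max (s:ℝ) 1)^θ)
      ≤ A*K*(1 + 2/(θ+1)) * jr^(α+θ+1) := by
    calc ∑ s ∈ Finset.range (N+1), w (i+s) * (K * (max (s:ℝ) 1)^θ)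
        ≤ ∑ s ∈ Finset.range (N+1), (A * jr^α * K) * (max (s:ℝ) 1)^θ := by
          apply Finset.sum_le_sum
          intro s _
          have := mul_le_mul_of_nonneg_right (hwb s) (mul_nonneg hK (hmaxnn s))
          calc w (i+s) * (K * (max (s:ℝ) 1)^θ) ≤ A * jr^α * (K * (max (s:ℝ) 1)^θ) := this
            _ = (A * jr^α * K) * (max (s:ℝ) 1)^θ := by ring
      _ = (A * jr^α * K) * ∑ s ∈ Finset.range (N+1), (max (s:ℝ) 1)^θ := by
          rw [Finset.mul_sum]
      _ ≤ (A * jr^α * K) * (1 + (2/(θ+1)) * jr^(θ+1)) := by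
          apply mul_le_mul_of_nonneg_left hsum_max
          have : (0:ℝ) ≤ jr^α := Real.rpow_nonneg hj0.le _
          positivity
      _ = A*K*(jr^α + (2/(θ+1)) * (jr^α * jr^(θ+1))) := by ring
      _ = A*K*(jr^α + (2/(θ+1)) * jr^(α+θ+1)) := by rw [hrpow_add]
      _ ≤ A*K*(jr^(α+θ+1) + (2/(θ+1)) * jr^(α+θ+1)) := by
          apply mul_le_mul_of_nonneg_left _ (mul_nonneg hA hK)
          linarith
      _ = A*K*(1 + 2/(θ+1)) * jr^(α+θ+1) := by ring
  -- Part B : tail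
  have htermB : ∀ t : ℕ, w (i+(t+(N+1))) * (K * (max ((t+(N+1):ℕ):ℝ) 1)^θ)
      ≤ A*K*((N:ℝ)+1+t)^(α+θ) := by
    intro t
    have hbase : (0:ℝ) < (N:ℝ)+1+t := by
      have := Nat.cast_nonneg (α := ℝ) t
      have := Nat.cast_nonneg (α := ℝ) N
      linarith
    have hmaxeq : (max ((t+(N+1):ℕ):ℝ) 1) = (N:ℝ)+1+t := by
      rw [max_eq_left]
      · push_cast; ring
      · push_cast; linarith [Nat.cast_nonneg (α := ℝ) t, Nat.cast_nonneg (α := ℝ) N]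
    have hw2 : w (i+(t+(N+1))) ≤ A * ((N:ℝ)+1+t)^α := by
      refine (hw (i+(t+(N+1)))).trans ?_
      apply mul_le_mul_of_nonneg_left _ hA
      apply Real.rpow_le_rpow_of_nonpos hbase _ hα
      push_cast
      linarith [Nat.cast_nonneg (α := ℝ) i, hj0]
    calc w (i+(t+(N+1))) * (K * (max ((t+(N+1):ℕ):ℝ) 1)^θ)
        ≤ (A * ((N:ℝ)+1+t)^α) * (K * ((N:ℝ)+1+t)^θ) := by
          rw [hmaxeq]
          apply mul_le_mul hw2 le_rfl
            (mul_nonneg hK (Real.rpow_nonneg hbase.le _))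
            (mul_nonneg hA (Real.rpow_nonneg hbase.le _))
      _ = A*K*(((N:ℝ)+1+t)^α * ((N:ℝ)+1+t)^θ) := by ring
      _ = A*K*((N:ℝ)+1+t)^(α+θ) := by rw [← Real.rpow_add hbase]
  have hBsum1 : Summable (fun t : ℕ => w (i+(t+(N+1))) * (K * (max ((t+(N+1):ℕ):ℝ) 1)^θ)) :=
    (summable_nat_add_iff (N+1)).mpr hF
  have hBsum2 : Summable (fun t : ℕ => A*K*((N:ℝ)+1+t)^(α+θ)) :=
    (tail_summable hαθ N).mul_left _
  have hpartB : ∑' t : ℕ, w (i+(t+(N+1))) * (K * (max ((t+(N+1):ℕ):ℝ) 1)^θ)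
      ≤ A*K*(-(α+θ)-1)⁻¹ * jr^(α+θ+1) := by
    calc ∑' t : ℕ, w (i+(t+(N+1))) * (K * (max ((t+(N+1):ℕ):ℝ) 1)^θ)
        ≤ ∑' t : ℕ, A*K*((N:ℝ)+1+t)^(α+θ) := Summable.tsum_le_tsum htermB hBsum1 hBsum2
      _ = A*K * ∑' t : ℕ, ((N:ℝ)+1+t)^(α+θ) := tsum_mul_left
      _ ≤ A*K * ((-(α+θ)-1)⁻¹ * ((N:ℕ):ℝ)^(α+θ+1)) := by
          apply mul_le_mul_of_nonneg_left (tail_bound hαθ hN1) (mul_nonneg hA hK)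
      _ ≤ A*K*(-(α+θ)-1)⁻¹ * jr^(α+θ+1) := le_of_eq (by rw [hjr]; ring)
  -- combine
  have hsplit := Summable.sum_add_tsum_nat_add
    (f := fun s : ℕ => w (i+s) * (K * (max (s:ℝ) 1)^θ)) (N+1) hF
  rw [← hsplit]
  refine le_trans (add_le_add hpartA hpartB) (le_of_eq (by ring))


private lemma fubini_swap (w : ℕ → ℝ) (g : ℕ → ℝ) (K : ℝ)
    (hwnn : ∀ l, 0 ≤ w l) (hgnn : ∀ r, 0 ≤ g r) (hgK : ∀ r, g r ≤ K)
    (hwsum : Summable w) :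
    ∑' i : ℕ, (w i * ∑ l ∈ Finset.range i, w l * g (i - l))
      = ∑' l : ℕ, (w l * ∑' s : ℕ, w (l+1+s) * g (s+1)) := by
  have hK0 : (0:ℝ) ≤ K := le_trans (hgnn 0) (hgK 0)
  have hwnorm : Summable (fun l : ℕ => ‖w l‖) :=
    hwsum.congr (fun l => by rw [Real.norm_eq_abs, abs_of_nonneg (hwnn l)]) |>.congr (fun l => rfl)
  have hprod : Summable (fun p : ℕ × ℕ => w p.1 * w p.2) :=
    summable_mul_of_summable_norm hwnorm hwnorm
  set F2 : ℕ × ℕ → ℝ := fun p => if p.2 < p.1 then w p.1 * w p.2 * g (p.1 - p.2) else 0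
    with hF2
  have hF2nn : ∀ p, 0 ≤ F2 p := by
    intro p
    simp only [hF2]
    split
    · exact mul_nonneg (mul_nonneg (hwnn _) (hwnn _)) (hgnn _)
    · exact le_rfl
  have hF2le : ∀ p, F2 p ≤ K * (w p.1 * w p.2) := by
    intro p
    simp only [hF2]
    split
    · calc w p.1 * w p.2 * g (p.1 - p.2) ≤ w p.1 * w p.2 * K :=
            mul_le_mul_of_nonneg_left (hgK _) (mul_nonneg (hwnn _) (hwnn _))
        _ = K * (w p.1 * w p.2) := by ring
    · exact mul_nonneg hK0 (mul_nonneg (hwnn _) (hwnn _))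
  have hF2sum : Summable F2 :=
    Summable.of_nonneg_of_le hF2nn hF2le (hprod.mul_left K)
  have e : ℕ × ℕ → ℕ × ℕ := fun q => (q.1+1+q.2, q.1)
  have hinj : Function.Injective (fun q : ℕ × ℕ => ((q.1+1+q.2, q.1) : ℕ × ℕ)) := by
    intro q q' h
    simp only [Prod.mk.injEq] at h
    obtain ⟨h1, h2⟩ := h
    have : q.2 = q'.2 := by omega
    exact Prod.ext h2 this
  have hsupp : Function.support F2 ⊆ Set.range (fun q : ℕ × ℕ => ((q.1+1+q.2, q.1) : ℕ × ℕ)) := by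
    intro p hp
    simp only [Function.mem_support, hF2] at hp
    by_cases hlt : p.2 < p.1
    · refine ⟨(p.2, p.1 - p.2 - 1), ?_⟩
      simp only
      apply Prod.ext
      · simp only; omega
      · simp only
    · exfalso; apply hp; rw [if_neg hlt]
  have hEq1 : ∑' q : ℕ × ℕ, F2 (q.1+1+q.2, q.1) = ∑' p : ℕ × ℕ, F2 p :=
    Function.Injective.tsum_eq hinj hsupp
  -- LHS
  have hLHS : ∀ i : ℕ, w i * ∑ l ∈ Finset.range i, w l * g (i - l) = ∑' l : ℕ, F2 (i, l) := by
    intro i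
    have h1 : ∑' l : ℕ, F2 (i, l) = ∑ l ∈ Finset.range i, F2 (i, l) := by
      apply tsum_eq_sum
      intro l hl
      simp only [Finset.mem_range, not_lt] at hl
      simp only [hF2]
      rw [if_neg (by omega)]
    rw [h1, Finset.mul_sum]
    apply Finset.sum_congr rfl
    intro l hl
    simp only [Finset.mem_range] at hl
    simp only [hF2]
    rw [if_pos hl]
    ring
  have hcompsum : Summable ((fun p : ℕ × ℕ => F2 p) ∘ (fun q : ℕ × ℕ => ((q.1+1+q.2, q.1) : ℕ × ℕ))) :=
    hF2sum.comp_injective hinj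
  have hRHS : ∀ l : ℕ, (∑' s : ℕ, F2 (l+1+s, l)) = w l * ∑' s : ℕ, w (l+1+s) * g (s+1) := by
    intro l
    rw [← tsum_mul_left]
    apply tsum_congr
    intro s
    simp only [hF2]
    rw [if_pos (by omega)]
    have : l+1+s - l = s+1 := by omega
    rw [this]
    ring
  calc ∑' i : ℕ, (w i * ∑ l ∈ Finset.range i, w l * g (i - l))
      = ∑' i : ℕ, ∑' l : ℕ, F2 (i, l) := tsum_congr hLHS
    _ = ∑' p : ℕ × ℕ, F2 p := (Summable.tsum_prod hF2sum).symm
    _ = ∑' q : ℕ × ℕ, F2 (q.1+1+q.2, q.1) := hEq1.symm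
    _ = ∑' l : ℕ, ∑' s : ℕ, F2 (l+1+s, l) := Summable.tsum_prod hcompsum
    _ = ∑' l : ℕ, (w l * ∑' s : ℕ, w (l+1+s) * g (s+1)) := tsum_congr hRHS


private lemma inner_eps_X {H : Type*} [NormedAddCommGroup H] [InnerProductSpace ℝ H]
    (σε : ℝ) (ε : ℤ → H)
    (hortho : ∀ m n : ℤ, ⟪ε m, ε n⟫ = if m = n then σε ^ 2 else 0)
    (b : ℕ → ℝ) (X : ℤ → H)
    (hX : ∀ n : ℤ, HasSum (fun j : ℕ => b j • ε (n - (j : ℤ))) (X n)) :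
    ∀ l m : ℤ, ⟪ε l, X m⟫ = σε^2 * (if 0 ≤ m - l then b (m - l).toNat else 0) := by
  intro l m
  have h1 := (innerSL ℝ (ε l)).hasSum (hX m)
  simp only [innerSL_apply_apply, inner_smul_right, hortho] at h1
  by_cases hml : 0 ≤ m - l
  · rw [if_pos hml]
    have hfun : (fun j : ℕ => b j * (if l = m - (j:ℤ) then σε^2 else 0))
        = fun j : ℕ => if j = (m - l).toNat then σε^2 * b ((m-l).toNat) else 0 := by
      funext j
      by_cases hj : j = (m-l).toNat
      · have hjz : (j:ℤ) = m - l := by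
          rw [hj]; exact Int.toNat_of_nonneg hml
        rw [if_pos hj, if_pos (by omega), hj]
        ring
      · rw [if_neg hj]
        have hne : l ≠ m - (j:ℤ) := by
          intro hc
          apply hj
          omega
        rw [if_neg hne, mul_zero]
    rw [hfun] at h1
    exact h1.unique (hasSum_ite_eq _ _)
  · rw [if_neg hml, mul_zero]
    have hfun : (fun j : ℕ => b j * (if l = m - (j:ℤ) then σε^2 else 0))
        = fun _ : ℕ => (0:ℝ) := by
      funext j
      have hne : l ≠ m - (j:ℤ) := by
        intro hc
        apply hml
        omega
      rw [if_neg hne, mul_zero]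
    rw [hfun] at h1
    exact h1.unique hasSum_zero

private lemma inner_XX {H : Type*} [NormedAddCommGroup H] [InnerProductSpace ℝ H]
    (σε : ℝ) (hσε : 0 < σε) (ε : ℤ → H)
    (hortho : ∀ m n : ℤ, ⟪ε m, ε n⟫ = if m = n then σε ^ 2 else 0)
    (b : ℕ → ℝ) (X : ℤ → H)
    (hX : ∀ n : ℤ, HasSum (fun j : ℕ => b j • ε (n - (j : ℤ))) (X n))
    (hbsum : ∀ r : ℕ, Summable (fun s : ℕ => |b s| * |b (s+r)|))
    (Cρ θ : ℝ)
    (hρ : ∀ r : ℕ, ∑' s : ℕ, |b s| * |b (s+r)| ≤ Cρ * (max (r:ℝ) 1)^θ) :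
    ∀ (n : ℤ) (r : ℕ), |⟪X (n - (r:ℤ)), X n⟫| ≤ σε^2 * Cρ * (max (r:ℝ) 1)^θ := by
  intro n r
  have h1 := (innerSL ℝ (X n)).hasSum (hX (n - (r:ℤ)))
  simp only [innerSL_apply_apply, inner_smul_right] at h1
  have hfun : (fun j : ℕ => b j * ⟪X n, ε (n - (r:ℤ) - (j:ℤ))⟫)
      = fun j : ℕ => σε^2 * (b j * b (j+r)) := by
    funext j
    rw [real_inner_comm, inner_eps_X σε ε hortho b X hX]
    have he : n - (n - (r:ℤ) - (j:ℤ)) = (r:ℤ) + (j:ℤ) := by ring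
    rw [he, if_pos (by positivity)]
    have : ((r:ℤ) + (j:ℤ)).toNat = j + r := by omega
    rw [this]
    ring
  rw [hfun] at h1
  have habs : Summable (fun j : ℕ => |σε^2 * (b j * b (j+r))|) := by
    refine ((hbsum r).mul_left (σε^2)).congr fun j => ?_
    rw [abs_mul, abs_of_nonneg (sq_nonneg σε), abs_mul]
  rw [real_inner_comm, ← h1.tsum_eq]
  calc |∑' j : ℕ, σε^2 * (b j * b (j+r))|
      ≤ ∑' j : ℕ, σε^2 * (|b j| * |b (j+r)|) := by
        have := norm_tsum_le_tsum_norm (f := fun j : ℕ => σε^2 * (b j * b (j+r)))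
          (habs.congr fun j => (Real.norm_eq_abs _).symm)
        simpa [Real.norm_eq_abs] using this
    _ = σε^2 * ∑' j : ℕ, |b j| * |b (j+r)| := tsum_mul_left
    _ ≤ σε^2 * (Cρ * (max (r:ℝ) 1)^θ) :=
        mul_le_mul_of_nonneg_left (hρ r) (sq_nonneg σε)
    _ = σε^2 * Cρ * (max (r:ℝ) 1)^θ := by ring


/-- For a long-memory linear process with coefficients satisfying the
long-memory decay conditions, for every `δ > 0` there is a constant `C` such that the
truncated Wiener–Kolmogorov prediction error satisfies
`| ‖X_{k+1} + ∑_{j=1}^k a_j X_{k+1-j}‖² - σ_ε² | ≤ C k^{-1+δ}` for all `k ≥ 1`. -/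
theorem truncated_WK_prediction_error
    {H : Type*} [NormedAddCommGroup H] [InnerProductSpace ℝ H]
    (d : ℝ) (hd : 0 < d) (hd' : d < 1 / 2)
    (σε : ℝ) (hσε : 0 < σε)
    (ε : ℤ → H)
    (hortho : ∀ m n : ℤ, ⟪ε m, ε n⟫ = if m = n then σε ^ 2 else 0)
    (a b : ℕ → ℝ) (ha0 : a 0 = 1) (hb0 : b 0 = 1)
    (hb2 : Summable fun j => (b j) ^ 2)
    (ha1 : Summable fun j => |a j|)
    (X : ℤ → H)
    (hX : ∀ n : ℤ, HasSum (fun j : ℕ => b j • ε (n - (j : ℤ))) (X n))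
    (hε : ∀ n : ℤ, HasSum (fun j : ℕ => a j • X (n - (j : ℤ))) (ε n))
    (hdecay : ∀ δ : ℝ, 0 < δ → ∃ C₁ C₂ : ℝ, ∀ j : ℕ, 1 ≤ j →
      |a j| ≤ C₁ * (j : ℝ) ^ (-d - 1 + δ) ∧ |b j| ≤ C₂ * (j : ℝ) ^ (d - 1 + δ)) :
    ∀ δ : ℝ, 0 < δ → ∃ C : ℝ, ∀ k : ℕ, 1 ≤ k →
      |‖X ((k : ℤ) + 1) + ∑ j ∈ Finset.Icc 1 k, a j • X ((k : ℤ) + 1 - (j : ℤ))‖ ^ 2 - σε ^ 2|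
        ≤ C * (k : ℝ) ^ (-1 + δ) := by
  intro δ hδ
  -- choice of small exponent δ₀
  obtain ⟨δ₀, hδ₀pos, hδ₀δ, hδ₀d, hδ₀8⟩ :
      ∃ x : ℝ, 0 < x ∧ x ≤ δ/4 ∧ x ≤ (1-2*d)/4 ∧ x ≤ 1/8 := by
    refine ⟨min (δ/4) (min ((1-2*d)/4) (1/8)), ?_, min_le_left _ _,
      le_trans (min_le_right _ _) (min_le_left _ _),
      le_trans (min_le_right _ _) (min_le_right _ _)⟩
    apply lt_min (by linarith)
    exact lt_min (by linarith) (by norm_num)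
  obtain ⟨C₁, C₂, hC⟩ := hdecay δ₀ hδ₀pos
  obtain ⟨α, hαdef⟩ : ∃ x : ℝ, x = -d-1+δ₀ := ⟨_, rfl⟩
  obtain ⟨η, hηdef⟩ : ∃ x : ℝ, x = d-1+δ₀ := ⟨_, rfl⟩
  obtain ⟨θ, hθdef⟩ : ∃ x : ℝ, x = 2*η+1 := ⟨_, rfl⟩
  rw [← hαdef, ← hηdef] at hC
  have hη1 : -1 < η := by rw [hηdef]; linarith
  have hη2 : 2*η < -1 := by rw [hηdef]; linarith
  have hη0 : η ≤ 0 := by linarith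
  have hθ0 : θ ≤ 0 := by rw [hθdef]; linarith
  have hθ1 : -1 < θ := by rw [hθdef]; linarith
  have hα0 : α ≤ 0 := by rw [hαdef]; linarith
  have hαθ : α + θ < -1 := by rw [hαdef, hθdef, hηdef]; linarith
  have h2αθ : 2*α+θ+1 < -1 := by rw [hαdef, hθdef, hηdef]; linarith
  have hexpfin : 2*α+θ+2 = -1+4*δ₀ := by rw [hαdef, hθdef, hηdef]; ring
  -- constants A, B
  obtain ⟨A, hAdef⟩ : ∃ x : ℝ, x = max C₁ 1 := ⟨_, rfl⟩
  obtain ⟨B, hBdef⟩ : ∃ x : ℝ, x = max C₂ 1 := ⟨_, rfl⟩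
  have hA1 : (1:ℝ) ≤ A := hAdef ▸ le_max_right _ _
  have hB1 : (1:ℝ) ≤ B := hBdef ▸ le_max_right _ _
  have hA0 : (0:ℝ) ≤ A := by linarith
  have hbb : ∀ s : ℕ, |b s| ≤ B * (max (s:ℝ) 1)^η := by
    intro s
    rcases Nat.eq_zero_or_pos s with h | h
    · subst h
      rw [hb0]
      simp only [Nat.cast_zero, abs_one]
      rw [show (max (0:ℝ) 1) = 1 from by norm_num, Real.one_rpow, mul_one]
      exact hB1
    · have h1 := (hC s h).2
      have hmax : max ((s:ℝ)) 1 = (s:ℝ) := max_eq_left (by exact_mod_cast h)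
      rw [hmax]
      refine h1.trans ?_
      apply mul_le_mul_of_nonneg_right (hBdef ▸ le_max_left _ _)
      exact Real.rpow_nonneg (Nat.cast_nonneg _) _
  -- summability of |b s| * |b (s+r)|
  have hbsum : ∀ r : ℕ, Summable (fun s : ℕ => |b s| * |b (s+r)|) := by
    intro r
    apply Summable.of_nonneg_of_le
      (fun s => mul_nonneg (abs_nonneg _) (abs_nonneg _)) (fun s => ?_)
      ((hb2.add ((summable_nat_add_iff r).mpr hb2)).div_const 2)
    nlinarith [sq_nonneg (|b s| - |b (s+r)|), sq_abs (b s), sq_abs (b (s+r))]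
  -- the covariance constant
  obtain ⟨Cρ, hCρdef⟩ : ∃ x : ℝ, x = B^2*(2 + 2/(η+1) + (-(2*η)-1)⁻¹) := ⟨_, rfl⟩
  have hCρ0 : 0 ≤ Cρ := by
    have h1 : (0:ℝ) < 2/(η+1) := div_pos two_pos (by linarith)
    have h2 : (0:ℝ) ≤ (-(2*η)-1)⁻¹ := inv_nonneg.mpr (by linarith)
    have h3 : (0:ℝ) ≤ B^2 := sq_nonneg B
    rw [hCρdef]; nlinarith
  have hρ : ∀ r : ℕ, ∑' s : ℕ, |b s| * |b (s+r)| ≤ Cρ * (max (r:ℝ) 1)^θ := by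
    intro r
    have h := rho_bound b B η hB1 hη1 hη2 hbb r
    rw [← hCρdef, ← hθdef] at h
    exact h
  obtain ⟨K, hKdef⟩ : ∃ x : ℝ, x = σε^2 * Cρ := ⟨_, rfl⟩
  have hK0 : 0 ≤ K := by rw [hKdef]; positivity
  have hmaxθ1 : ∀ r : ℕ, (max (r:ℝ) 1)^θ ≤ 1 :=
    fun r => Real.rpow_le_one_of_one_le_of_nonpos (le_max_right _ _) hθ0
  have hmaxθ0 : ∀ r : ℕ, (0:ℝ) ≤ (max (r:ℝ) 1)^θ :=
    fun r => Real.rpow_nonneg (le_trans zero_le_one (le_max_right _ _)) _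
  have hgK : ∀ r : ℕ, K * (max (r:ℝ) 1)^θ ≤ K := by
    intro r
    calc K * (max (r:ℝ) 1)^θ ≤ K * 1 := mul_le_mul_of_nonneg_left (hmaxθ1 r) hK0
      _ = K := mul_one K
  have hgnn : ∀ r : ℕ, 0 ≤ K * (max (r:ℝ) 1)^θ := fun r => mul_nonneg hK0 (hmaxθ0 r)
  -- bound on inner products of the process
  have hXXb : ∀ (n : ℤ) (r : ℕ), |⟪X (n - (r:ℤ)), X n⟫| ≤ K * (max (r:ℝ) 1)^θ := by
    intro n r
    have h := inner_XX σε hσε ε hortho b X hX hbsum Cρ θ hρ n r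
    rw [hKdef, mul_assoc, ← mul_assoc]
    exact h
  have hXnorm : ∀ n : ℤ, ‖X n‖^2 ≤ K := by
    intro n
    have h := hXXb n 0
    simp only [Nat.cast_zero, sub_zero] at h
    rw [real_inner_self_eq_norm_sq] at h
    have h2 := le_trans (le_abs_self _) h
    rw [show ((0:ℝ) ⊔ 1) = 1 from by norm_num, Real.one_rpow, mul_one] at h2
    exact h2
  have hXnorm' : ∀ n : ℤ, ‖X n‖ ≤ 1 + K := by
    intro n
    nlinarith [hXnorm n, norm_nonneg (X n), sq_nonneg (‖X n‖ - 1)]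
  -- the final constant
  obtain ⟨C₃, hC₃def⟩ : ∃ x : ℝ, x = A*K*(1 + 2/(θ+1) + (-(α+θ)-1)⁻¹) := ⟨_, rfl⟩
  have hC₃0 : 0 ≤ C₃ := by
    have h1 : (0:ℝ) ≤ 2/(θ+1) := div_nonneg (by norm_num) (by linarith)
    have h2 : (0:ℝ) ≤ (-(α+θ)-1)⁻¹ := inv_nonneg.mpr (by linarith)
    rw [hC₃def]
    have h3 : (0:ℝ) ≤ 1 + 2/(θ+1) + (-(α+θ)-1)⁻¹ := by linarith
    positivity
  have hCinv0 : (0:ℝ) ≤ (-(2*α+θ+1)-1)⁻¹ := inv_nonneg.mpr (by linarith)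
  refine ⟨2*C₃*A*(-(2*α+θ+1)-1)⁻¹, ?_⟩
  intro k hk
  have hk1 : (1:ℝ) ≤ (k:ℝ) := by exact_mod_cast hk
  have hk0 : (0:ℝ) < (k:ℝ) := by linarith
  -- weights
  set w : ℕ → ℝ := fun l => |a (k+1+l)| with hwdef
  have hwnn : ∀ l, 0 ≤ w l := fun l => abs_nonneg _
  have hwsum : Summable w :=
    ((summable_nat_add_iff (k+1)).mpr ha1).congr
      (fun l => by rw [show l + (k+1) = k+1+l from by omega])
  have hwa : ∀ l : ℕ, w l ≤ A * ((k:ℝ)+1+l)^α := by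
    intro l
    have h := (hC (k+1+l) (by omega)).1
    have hcast : ((k+1+l:ℕ):ℝ) = (k:ℝ)+1+l := by push_cast; ring
    rw [hcast] at h
    refine h.trans ?_
    apply mul_le_mul_of_nonneg_right (hAdef ▸ le_max_left _ _)
    apply Real.rpow_nonneg
    linarith [Nat.cast_nonneg (α := ℝ) l]
  have hwshift : ∀ i : ℕ, Summable (fun s => w (i+s)) :=
    fun i => ((summable_nat_add_iff i).mpr hwsum).congr (fun s => by rw [Nat.add_comm])
  have hwtail : ∀ i : ℕ, ∑' s : ℕ, w (i+s) ≤ ∑' l : ℕ, w l := by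
    intro i
    have h := Summable.sum_add_tsum_nat_add (f := w) i hwsum
    have h2 : ∑' s : ℕ, w (s+i) ≤ ∑' l : ℕ, w l := by
      rw [← h]
      have h3 : (0:ℝ) ≤ ∑ l ∈ Finset.range i, w l :=
        Finset.sum_nonneg fun l _ => hwnn l
      linarith
    calc ∑' s : ℕ, w (i+s) = ∑' s : ℕ, w (s+i) :=
          tsum_congr (fun s => by rw [Nat.add_comm])
      _ ≤ ∑' l : ℕ, w l := h2
  -- Tail sums and their bounds
  have hTailsum : ∀ i : ℕ, Summable (fun s : ℕ => w (i+s) * (K * (max (s:ℝ) 1)^θ)) :=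
    core_summable w K θ hK0 hθ0 hwnn hwsum
  have hTailK : ∀ i : ℕ, ∑' s : ℕ, w (i+s) * (K * (max (s:ℝ) 1)^θ) ≤ K * ∑' l : ℕ, w l := by
    intro i
    calc ∑' s : ℕ, w (i+s) * (K * (max (s:ℝ) 1)^θ)
        ≤ ∑' s : ℕ, K * w (i+s) := by
          apply Summable.tsum_le_tsum (fun s => ?_) (hTailsum i) ((hwshift i).mul_left K)
          calc w (i+s) * (K * (max (s:ℝ) 1)^θ) ≤ w (i+s) * K :=
                mul_le_mul_of_nonneg_left (hgK s) (hwnn _)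
            _ = K * w (i+s) := by ring
      _ = K * ∑' s : ℕ, w (i+s) := tsum_mul_left
      _ ≤ K * ∑' l : ℕ, w l := mul_le_mul_of_nonneg_left (hwtail i) hK0
  have hTailnn : ∀ i : ℕ, 0 ≤ ∑' s : ℕ, w (i+s) * (K * (max (s:ℝ) 1)^θ) :=
    fun i => tsum_nonneg (fun s => mul_nonneg (hwnn _) (hgnn s))
  have hcore : ∀ i : ℕ, ∑' s : ℕ, w (i+s) * (K * (max (s:ℝ) 1)^θ)
      ≤ C₃ * ((k:ℝ)+1+i)^(α+θ+1) := by
    intro i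
    rw [hC₃def]
    exact core_bound w A K α θ k hk hA0 hK0 hα0 hθ0 hθ1 hαθ hwnn hwsum hwa i
  -- the common summable dominating sequence
  have htermE : ∀ l : ℕ, w l * (C₃ * ((k:ℝ)+1+l)^(α+θ+1))
      ≤ C₃*A*((k:ℝ)+1+l)^(2*α+θ+1) := by
    intro l
    have hbase : (0:ℝ) < (k:ℝ)+1+l := by
      have := Nat.cast_nonneg (α := ℝ) l; linarith
    have h1 : w l * (C₃ * ((k:ℝ)+1+l)^(α+θ+1))
        ≤ (A * ((k:ℝ)+1+l)^α) * (C₃ * ((k:ℝ)+1+l)^(α+θ+1)) := by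
      apply mul_le_mul_of_nonneg_right (hwa l)
      exact mul_nonneg hC₃0 (Real.rpow_nonneg hbase.le _)
    refine h1.trans (le_of_eq ?_)
    have he : ((k:ℝ)+1+l)^(2*α+θ+1) = ((k:ℝ)+1+l)^α * ((k:ℝ)+1+l)^(α+θ+1) := by
      rw [← Real.rpow_add hbase]; congr 1; ring
    rw [he]; ring
  have hsumE : Summable (fun l : ℕ => w l * (C₃ * ((k:ℝ)+1+l)^(α+θ+1))) := by
    apply Summable.of_nonneg_of_le (fun l => ?_) htermE
      ((tail_summable h2αθ k).mul_left (C₃*A))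
    have hbase : (0:ℝ) < (k:ℝ)+1+l := by
      have := Nat.cast_nonneg (α := ℝ) l; linarith
    exact mul_nonneg (hwnn _) (mul_nonneg hC₃0 (Real.rpow_nonneg hbase.le _))
  have hEbound : ∑' l : ℕ, w l * (C₃ * ((k:ℝ)+1+l)^(α+θ+1))
      ≤ 2⁻¹ * (2*C₃*A*(-(2*α+θ+1)-1)⁻¹) * (k:ℝ)^(2*α+θ+2) := by
    calc ∑' l : ℕ, w l * (C₃ * ((k:ℝ)+1+l)^(α+θ+1))
        ≤ ∑' l : ℕ, C₃*A*((k:ℝ)+1+l)^(2*α+θ+1) :=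
          Summable.tsum_le_tsum htermE hsumE ((tail_summable h2αθ k).mul_left _)
      _ = C₃*A * ∑' l : ℕ, ((k:ℝ)+1+l)^(2*α+θ+1) := tsum_mul_left
      _ ≤ C₃*A * ((-(2*α+θ+1)-1)⁻¹ * (k:ℝ)^(2*α+θ+1+1)) := by
          apply mul_le_mul_of_nonneg_left (tail_bound h2αθ hk) (mul_nonneg hC₃0 hA0)
      _ = 2⁻¹ * (2*C₃*A*(-(2*α+θ+1)-1)⁻¹) * (k:ℝ)^(2*α+θ+2) := by
          rw [show 2*α+θ+1+1 = 2*α+θ+2 from by ring]; ring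
  -- ===== Hilbert space part =====
  have hεk := hε ((k:ℤ)+1)
  set S : H := ∑ j ∈ Finset.range (k+1), a j • X ((k:ℤ)+1 - (j:ℤ)) with hSdef
  set R : H := ε ((k:ℤ)+1) - S with hRdef
  have hRS : ε ((k:ℤ)+1) = R + S := by rw [hRdef]; abel
  have huR : HasSum (fun i : ℕ => a (k+1+i) • X (-(i:ℤ))) R := by
    have h1 : HasSum (fun i : ℕ => a (i+(k+1)) • X ((k:ℤ)+1 - ((i+(k+1):ℕ):ℤ))) R := by
      apply (hasSum_nat_add_iff (f := fun j : ℕ => a j • X ((k:ℤ)+1 - (j:ℤ))) (k+1)).mpr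
      rw [← hSdef, ← hRS]
      exact hεk
    have heq : ∀ i : ℕ, a (i+(k+1)) • X ((k:ℤ)+1 - ((i+(k+1):ℕ):ℤ)) = a (k+1+i) • X (-(i:ℤ)) := by
      intro i
      rw [show i+(k+1) = k+1+i from by omega,
        show (k:ℤ)+1 - ((k+1+i:ℕ):ℤ) = -(i:ℤ) from by push_cast; ring]
    exact (funext heq) ▸ h1
  have horth : ⟪ε ((k:ℤ)+1), R⟫ = 0 := by
    have h2 := (innerSL ℝ (ε ((k:ℤ)+1))).hasSum huR
    simp only [innerSL_apply_apply, inner_smul_right] at h2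
    have hz : (fun i : ℕ => a (k+1+i) * ⟪ε ((k:ℤ)+1), X (-(i:ℤ))⟫) = fun _ : ℕ => (0:ℝ) := by
      funext i
      rw [inner_eps_X σε ε hortho b X hX]
      rw [if_neg (by omega : ¬ (0:ℤ) ≤ -(i:ℤ) - ((k:ℤ)+1))]
      ring
    rw [hz] at h2
    exact h2.unique hasSum_zero
  have hnormS : ‖S‖^2 = σε^2 + ‖R‖^2 := by
    have hSεR : S = ε ((k:ℤ)+1) - R := by rw [hRdef]; abel
    rw [hSεR, norm_sub_sq_real, horth]
    have hεε : ‖ε ((k:ℤ)+1)‖^2 = σε^2 := by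
      rw [← real_inner_self_eq_norm_sq, hortho, if_pos rfl]
    rw [hεε]; ring
  -- pairwise bound
  have hpair : ∀ i l : ℕ, |⟪X (-(i:ℤ)), X (-(l:ℤ))⟫|
      ≤ K * (max ((((i-l)+(l-i) : ℕ)):ℝ) 1)^θ := by
    intro i l
    rcases le_total l i with h | h
    · have e1 : (-(l:ℤ)) - (((i-l:ℕ)):ℤ) = -(i:ℤ) := by
        rw [Nat.cast_sub h]; ring
      have h2 := hXXb (-(l:ℤ)) (i-l)
      rw [e1] at h2
      rw [show (i-l)+(l-i) = i-l from by omega]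
      exact h2
    · have e1 : (-(i:ℤ)) - (((l-i:ℕ)):ℤ) = -(l:ℤ) := by
        rw [Nat.cast_sub h]; ring
      have h2 := hXXb (-(i:ℤ)) (l-i)
      rw [e1, real_inner_comm] at h2
      rw [show (i-l)+(l-i) = l-i from by omega]
      exact h2
  -- inner tsum bound per i
  have hPisum : ∀ i : ℕ, Summable
      (fun l : ℕ => w l * (K * (max ((((i-l)+(l-i) : ℕ)):ℝ) 1)^θ)) := by
    intro i
    apply Summable.of_nonneg_of_le (fun l => mul_nonneg (hwnn _) (hgnn _)) (fun l => ?_)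
      (hwsum.mul_right K)
    exact mul_le_mul_of_nonneg_left (hgK _) (hwnn _)
  have hXR : ∀ i : ℕ, |⟪X (-(i:ℤ)), R⟫|
      ≤ ∑' l : ℕ, w l * (K * (max ((((i-l)+(l-i) : ℕ)):ℝ) 1)^θ) := by
    intro i
    have h3 := (innerSL ℝ (X (-(i:ℤ)))).hasSum huR
    simp only [innerSL_apply_apply, inner_smul_right] at h3
    rw [← h3.tsum_eq]
    have habs : Summable (fun l : ℕ => |a (k+1+l)| * |⟪X (-(i:ℤ)), X (-(l:ℤ))⟫|) := by
      apply Summable.of_nonneg_of_le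
        (fun l => mul_nonneg (abs_nonneg _) (abs_nonneg _)) (fun l => ?_)
        (hwsum.mul_right K)
      calc |a (k+1+l)| * |⟪X (-(i:ℤ)), X (-(l:ℤ))⟫|
          ≤ |a (k+1+l)| * (K * (max ((((i-l)+(l-i) : ℕ)):ℝ) 1)^θ) :=
            mul_le_mul_of_nonneg_left (hpair i l) (abs_nonneg _)
        _ ≤ |a (k+1+l)| * K := mul_le_mul_of_nonneg_left (hgK _) (abs_nonneg _)
    calc |∑' l : ℕ, a (k+1+l) * ⟪X (-(i:ℤ)), X (-(l:ℤ))⟫|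
        ≤ ∑' l : ℕ, |a (k+1+l)| * |⟪X (-(i:ℤ)), X (-(l:ℤ))⟫| := by
          have hh := norm_tsum_le_tsum_norm
            (f := fun l : ℕ => a (k+1+l) * ⟪X (-(i:ℤ)), X (-(l:ℤ))⟫)
            (habs.congr fun l => by rw [Real.norm_eq_abs, abs_mul])
          simpa [Real.norm_eq_abs, abs_mul] using hh
      _ ≤ ∑' l : ℕ, w l * (K * (max ((((i-l)+(l-i) : ℕ)):ℝ) 1)^θ) := by
          apply Summable.tsum_le_tsum (fun l => ?_) habs (hPisum i)
          exact mul_le_mul_of_nonneg_left (hpair i l) (abs_nonneg _)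
  -- ‖R‖² bounded by the weighted double sum
  have hwPisum : Summable (fun i : ℕ =>
      w i * ∑' l : ℕ, w l * (K * (max ((((i-l)+(l-i) : ℕ)):ℝ) 1)^θ)) := by
    apply Summable.of_nonneg_of_le
      (fun i => mul_nonneg (hwnn _) (tsum_nonneg fun l => mul_nonneg (hwnn _) (hgnn _)))
      (fun i => ?_) (hwsum.mul_right (K * ∑' l : ℕ, w l))
    apply mul_le_mul_of_nonneg_left _ (hwnn i)
    calc ∑' l : ℕ, w l * (K * (max ((((i-l)+(l-i) : ℕ)):ℝ) 1)^θ)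
        ≤ ∑' l : ℕ, K * w l := by
          apply Summable.tsum_le_tsum (fun l => ?_) (hPisum i) (hwsum.mul_left K)
          calc w l * (K * (max ((((i-l)+(l-i) : ℕ)):ℝ) 1)^θ) ≤ w l * K :=
                mul_le_mul_of_nonneg_left (hgK _) (hwnn _)
            _ = K * w l := by ring
      _ = K * ∑' l : ℕ, w l := tsum_mul_left
  have hRR2 : ‖R‖^2 ≤ ∑' i : ℕ,
      w i * ∑' l : ℕ, w l * (K * (max ((((i-l)+(l-i) : ℕ)):ℝ) 1)^θ) := by
    have hRRsum := (innerSL ℝ R).hasSum huR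
    simp only [innerSL_apply_apply, inner_smul_right] at hRRsum
    rw [← real_inner_self_eq_norm_sq, ← hRRsum.tsum_eq]
    have hfabs : Summable (fun i : ℕ => |a (k+1+i) * ⟪R, X (-(i:ℤ))⟫|) := by
      apply Summable.of_nonneg_of_le (fun i => abs_nonneg _) (fun i => ?_)
        (hwsum.mul_right ((1+K) * ‖R‖))
      rw [abs_mul]
      apply mul_le_mul_of_nonneg_left _ (abs_nonneg _)
      calc |⟪R, X (-(i:ℤ))⟫| ≤ ‖R‖ * ‖X (-(i:ℤ))‖ := abs_real_inner_le_norm _ _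
        _ ≤ ‖R‖ * (1+K) := mul_le_mul_of_nonneg_left (hXnorm' _) (norm_nonneg _)
        _ = (1+K) * ‖R‖ := by ring
    calc ∑' i : ℕ, a (k+1+i) * ⟪R, X (-(i:ℤ))⟫
        ≤ ∑' i : ℕ, |a (k+1+i) * ⟪R, X (-(i:ℤ))⟫| :=
          Summable.tsum_le_tsum (fun i => le_abs_self _) hRRsum.summable hfabs
      _ ≤ ∑' i : ℕ, w i * ∑' l : ℕ, w l * (K * (max ((((i-l)+(l-i) : ℕ)):ℝ) 1)^θ) := by
          apply Summable.tsum_le_tsum (fun i => ?_) hfabs hwPisum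
          rw [abs_mul]
          apply mul_le_mul_of_nonneg_left _ (abs_nonneg _)
          rw [real_inner_comm]
          exact hXR i
  -- split the inner tsum at i
  have hsplitPi : ∀ i : ℕ,
      ∑' l : ℕ, w l * (K * (max ((((i-l)+(l-i) : ℕ)):ℝ) 1)^θ)
        = (∑ l ∈ Finset.range i, w l * (K * (max (((i-l : ℕ)):ℝ) 1)^θ))
          + ∑' s : ℕ, w (i+s) * (K * (max ((s:ℕ):ℝ) 1)^θ) := by
    intro i
    rw [← Summable.sum_add_tsum_nat_add (f := fun l : ℕ =>
      w l * (K * (max ((((i-l)+(l-i) : ℕ)):ℝ) 1)^θ)) i (hPisum i)]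
    congr 1
    · apply Finset.sum_congr rfl
      intro l hl
      simp only [Finset.mem_range] at hl
      rw [show (i-l)+(l-i) = i-l from by omega]
    · apply tsum_congr
      intro s
      rw [show (i-(s+i))+((s+i)-i) = s from by omega,
        show s+i = i+s from by omega]
  -- part 1 : the triangular part via Fubini
  have hfub := fubini_swap w (fun r : ℕ => K * (max (r:ℝ) 1)^θ) K hwnn hgnn hgK hwsum
  -- bound the shifted inner sums
  have hshiftle : ∀ l : ℕ, ∑' s : ℕ, w (l+1+s) * (K * (max ((s+1:ℕ):ℝ) 1)^θ)
      ≤ ∑' s : ℕ, w (l+s) * (K * (max (s:ℝ) 1)^θ) := by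
    intro l
    have hcongr : (fun s : ℕ => w (l+1+s) * (K * (max ((s+1:ℕ):ℝ) 1)^θ))
        = fun s : ℕ => w (l+(s+1)) * (K * (max (((s+1:ℕ)):ℝ) 1)^θ) := by
      funext s
      rw [show l+1+s = l+(s+1) from by omega]
    rw [hcongr]
    have h := Summable.sum_add_tsum_nat_add (f := fun s : ℕ =>
      w (l+s) * (K * (max ((s:ℕ):ℝ) 1)^θ)) 1 (hTailsum l)
    have h0 : (0:ℝ) ≤ ∑ s ∈ Finset.range 1, w (l+s) * (K * (max ((s:ℕ):ℝ) 1)^θ) := by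
      apply Finset.sum_nonneg
      intro s _
      exact mul_nonneg (hwnn _) (hgnn _)
    linarith [h]
  have hshiftnn : ∀ l : ℕ, (0:ℝ) ≤ ∑' s : ℕ, w (l+1+s) * (K * (max ((s+1:ℕ):ℝ) 1)^θ) :=
    fun l => tsum_nonneg (fun s => mul_nonneg (hwnn _) (hgnn _))
  -- summabilities for combining
  have hG1sum : Summable (fun i : ℕ =>
      w i * ∑ l ∈ Finset.range i, w l * (K * (max (((i-l : ℕ)):ℝ) 1)^θ)) := by
    apply Summable.of_nonneg_of_le
      (fun i => mul_nonneg (hwnn _)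
        (Finset.sum_nonneg fun l _ => mul_nonneg (hwnn _) (hgnn _)))
      (fun i => ?_) (hwsum.mul_right (K * ∑' l : ℕ, w l))
    apply mul_le_mul_of_nonneg_left _ (hwnn i)
    calc ∑ l ∈ Finset.range i, w l * (K * (max (((i-l : ℕ)):ℝ) 1)^θ)
        ≤ ∑ l ∈ Finset.range i, K * w l := by
          apply Finset.sum_le_sum
          intro l _
          calc w l * (K * (max (((i-l : ℕ)):ℝ) 1)^θ) ≤ w l * K :=
                mul_le_mul_of_nonneg_left (hgK _) (hwnn _)
            _ = K * w l := by ring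
      _ = K * ∑ l ∈ Finset.range i, w l := by rw [Finset.mul_sum]
      _ ≤ K * ∑' l : ℕ, w l := by
          apply mul_le_mul_of_nonneg_left _ hK0
          exact Summable.sum_le_tsum _ (fun l _ => hwnn l) hwsum
  have hG2sum : Summable (fun i : ℕ =>
      w i * ∑' s : ℕ, w (i+s) * (K * (max ((s:ℕ):ℝ) 1)^θ)) := by
    apply Summable.of_nonneg_of_le
      (fun i => mul_nonneg (hwnn _) (hTailnn i)) (fun i => ?_)
      (hwsum.mul_right (K * ∑' l : ℕ, w l))
    exact mul_le_mul_of_nonneg_left (hTailK i) (hwnn i)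
  -- part 2 bound
  have hpart2 : ∑' i : ℕ, w i * ∑' s : ℕ, w (i+s) * (K * (max ((s:ℕ):ℝ) 1)^θ)
      ≤ ∑' l : ℕ, w l * (C₃ * ((k:ℝ)+1+l)^(α+θ+1)) :=
    Summable.tsum_le_tsum (fun i => mul_le_mul_of_nonneg_left (hcore i) (hwnn i)) hG2sum hsumE
  -- part 1 bound
  have hpart1 : ∑' i : ℕ, w i * ∑ l ∈ Finset.range i, w l * (K * (max (((i-l : ℕ)):ℝ) 1)^θ)
      ≤ ∑' l : ℕ, w l * (C₃ * ((k:ℝ)+1+l)^(α+θ+1)) := by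
    rw [hfub]
    have hsumLHS : Summable (fun l : ℕ =>
        w l * ∑' s : ℕ, w (l+1+s) * (K * (max ((s+1:ℕ):ℝ) 1)^θ)) := by
      apply Summable.of_nonneg_of_le
        (fun l => mul_nonneg (hwnn _) (hshiftnn l))
        (fun l => ?_) (hwsum.mul_right (K * ∑' l : ℕ, w l))
      apply mul_le_mul_of_nonneg_left _ (hwnn l)
      exact (hshiftle l).trans (hTailK l)
    have hstep : ∀ l : ℕ,
        w l * ∑' s : ℕ, w (l+1+s) * (K * (max ((s+1:ℕ):ℝ) 1)^θ)
          ≤ w l * (C₃ * ((k:ℝ)+1+l)^(α+θ+1)) := by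
      intro l
      apply mul_le_mul_of_nonneg_left _ (hwnn l)
      exact (hshiftle l).trans (hcore l)
    exact Summable.tsum_le_tsum hstep hsumLHS hsumE
  -- combine everything
  have hRfinal : ‖R‖^2 ≤ (2*C₃*A*(-(2*α+θ+1)-1)⁻¹) * (k:ℝ)^(2*α+θ+2) := by
    have hsplit2 : ∑' i : ℕ,
        w i * ∑' l : ℕ, w l * (K * (max ((((i-l)+(l-i) : ℕ)):ℝ) 1)^θ)
        = (∑' i : ℕ, w i * ∑ l ∈ Finset.range i, w l * (K * (max (((i-l : ℕ)):ℝ) 1)^θ))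
          + ∑' i : ℕ, w i * ∑' s : ℕ, w (i+s) * (K * (max ((s:ℕ):ℝ) 1)^θ) := by
      rw [← Summable.tsum_add hG1sum hG2sum]
      apply tsum_congr
      intro i
      rw [hsplitPi i]
      ring
    have h := hRR2
    rw [hsplit2] at h
    calc ‖R‖^2 ≤ _ := h
      _ ≤ (∑' l : ℕ, w l * (C₃ * ((k:ℝ)+1+l)^(α+θ+1)))
          + ∑' l : ℕ, w l * (C₃ * ((k:ℝ)+1+l)^(α+θ+1)) := add_le_add hpart1 hpart2
      _ ≤ 2⁻¹ * (2*C₃*A*(-(2*α+θ+1)-1)⁻¹) * (k:ℝ)^(2*α+θ+2)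
          + 2⁻¹ * (2*C₃*A*(-(2*α+θ+1)-1)⁻¹) * (k:ℝ)^(2*α+θ+2) := add_le_add hEbound hEbound
      _ = (2*C₃*A*(-(2*α+θ+1)-1)⁻¹) * (k:ℝ)^(2*α+θ+2) := by ring
  -- final assembly
  have hSgoal : X ((k:ℤ)+1) + ∑ j ∈ Finset.Icc 1 k, a j • X ((k:ℤ)+1 - (j:ℤ)) = S := by
    rw [hSdef]
    have hins : Finset.range (k+1) = insert 0 (Finset.Icc 1 k) := by
      ext x
      simp only [Finset.mem_range, Finset.mem_insert, Finset.mem_Icc]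
      omega
    rw [hins, Finset.sum_insert (by simp)]
    congr 1
    rw [ha0, one_smul]
    norm_num
  rw [hSgoal, hnormS]
  rw [show σε^2 + ‖R‖^2 - σε^2 = ‖R‖^2 from by ring, abs_of_nonneg (sq_nonneg _)]
  calc ‖R‖^2 ≤ (2*C₃*A*(-(2*α+θ+1)-1)⁻¹) * (k:ℝ)^(2*α+θ+2) := hRfinal
    _ ≤ (2*C₃*A*(-(2*α+θ+1)-1)⁻¹) * (k:ℝ)^(-1+δ) := by
        apply mul_le_mul_of_nonneg_left _
          (mul_nonneg (mul_nonneg (by linarith) hA0) hCinv0)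
        rw [hexpfin]
        apply Real.rpow_le_rpow_of_exponent_le hk1
        linarith
end

section
/- For every k ≥ 1 the double series Σ_{j=k+1}^∞ Σ_{l=k+1}^∞ a_j a_l σ(l−j) converges absolutely and ‖X_{k+1} + Σ_{j=1}^k a_j X_{k+1−j}‖² = σ_ε² + Σ_{j=k+1}^∞ Σ_{l=k+1}^∞ a_j a_l σ(l−j); in particular the error of the truncated predictor X̃'_k(1) = −Σ_{j=1}^k a_j X_{k+1−j} equals σ_ε² plus the tail double sum. -/
open scoped RealInnerProductSpace BigOperators

section Aux

variable {H : Type*} [NormedAddCommGroup H] [InnerProductSpace ℝ H]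

lemma aux_inner_eps_X (σε : ℝ) (ε : ℤ → H)
    (hortho : ∀ m n : ℤ, ⟪ε m, ε n⟫ = if m = n then σε ^ 2 else 0)
    (b : ℕ → ℝ) (X : ℤ → H)
    (hX : ∀ n : ℤ, HasSum (fun j : ℕ => b j • ε (n - (j : ℤ))) (X n))
    (c n : ℤ) :
    ⟪ε c, X n⟫ = if 0 ≤ n - c then b (n - c).toNat * σε ^ 2 else 0 := by
  have h := (innerSL ℝ (ε c)).hasSum (hX n)
  simp only [innerSL_apply_apply, real_inner_smul_right, hortho] at h
  by_cases hd : 0 ≤ n - c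
  · have heq : (fun l : ℕ => b l * if c = n - (l : ℤ) then σε ^ 2 else 0)
        = fun l : ℕ => if l = (n - c).toNat then b (n - c).toNat * σε ^ 2 else 0 := by
      funext l
      by_cases hl : l = (n - c).toNat
      · subst hl
        rw [if_pos rfl, if_pos (by omega)]
      · rw [if_neg hl, if_neg (by omega), mul_zero]
    rw [heq] at h
    rw [if_pos hd]
    exact h.unique (hasSum_ite_eq _ _)
  · have heq : (fun l : ℕ => b l * if c = n - (l : ℤ) then σε ^ 2 else 0)
        = fun _ : ℕ => (0 : ℝ) := by
      funext l
      rw [if_neg (by omega), mul_zero]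
    rw [heq] at h
    rw [if_neg hd]
    exact h.unique hasSum_zero

lemma aux_stationary (σε : ℝ) (ε : ℤ → H)
    (hortho : ∀ m n : ℤ, ⟪ε m, ε n⟫ = if m = n then σε ^ 2 else 0)
    (b : ℕ → ℝ) (X : ℤ → H)
    (hX : ∀ n : ℤ, HasSum (fun j : ℕ => b j • ε (n - (j : ℤ))) (X n))
    (m n : ℤ) :
    ⟪X m, X n⟫ = ⟪X 0, X (n - m)⟫ := by
  have h1 := (innerSL ℝ (X n)).hasSum (hX m)
  have h2 := (innerSL ℝ (X (n - m))).hasSum (hX 0)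
  simp only [innerSL_apply_apply, real_inner_smul_right] at h1 h2
  have heq : (fun j : ℕ => b j * ⟪X (n - m), ε (0 - (j : ℤ))⟫)
      = fun j : ℕ => b j * ⟪X n, ε (m - (j : ℤ))⟫ := by
    funext j
    rw [real_inner_comm (ε (0 - (j:ℤ))) (X (n-m)), real_inner_comm (ε (m - (j:ℤ))) (X n),
      aux_inner_eps_X σε ε hortho b X hX,
      aux_inner_eps_X σε ε hortho b X hX]
    have : n - m - (0 - (j : ℤ)) = n - (m - (j : ℤ)) := by ring
    rw [this]
  rw [heq] at h2
  rw [real_inner_comm (X n) (X m), real_inner_comm (X (n-m)) (X 0)]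
  exact (h2.unique h1).symm

end Aux

/-- for every `k ≥ 1` the tail double series
`∑_{j=k+1}^∞ ∑_{l=k+1}^∞ a_j a_l σ(l-j)` converges absolutely and the squared error of the
truncated predictor `X̃'_k(1) = -∑_{j=1}^k a_j X_{k+1-j}` equals `σ_ε²` plus this double sum. -/
theorem truncated_WK_error_decomposition
    {H : Type*} [NormedAddCommGroup H] [InnerProductSpace ℝ H]
    (σε : ℝ) (hσε : 0 < σε)
    (ε : ℤ → H)
    (hortho : ∀ m n : ℤ, ⟪ε m, ε n⟫ = if m = n then σε ^ 2 else 0)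
    (a b : ℕ → ℝ) (ha0 : a 0 = 1) (hb0 : b 0 = 1)
    (hb2 : Summable fun j => (b j) ^ 2)
    (ha1 : Summable fun j => |a j|)
    (X : ℤ → H)
    (hX : ∀ n : ℤ, HasSum (fun j : ℕ => b j • ε (n - (j : ℤ))) (X n))
    (hε : ∀ n : ℤ, HasSum (fun j : ℕ => a j • X (n - (j : ℤ))) (ε n))
    (σ : ℤ → ℝ) (hσ : ∀ m : ℤ, σ m = ⟪X 0, X m⟫)
    (habs : Summable fun p : ℕ × ℕ =>
      |a (1 + p.1)| * |a (1 + p.2)| * |σ ((p.2 : ℤ) - (p.1 : ℤ))|) :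
    ∀ k : ℕ, 1 ≤ k →
      (Summable fun p : ℕ × ℕ =>
        |a (k + 1 + p.1)| * |a (k + 1 + p.2)| * |σ ((p.2 : ℤ) - (p.1 : ℤ))|) ∧
      ‖X ((k : ℤ) + 1) + ∑ j ∈ Finset.Icc 1 k, a j • X ((k : ℤ) + 1 - (j : ℤ))‖ ^ 2
        = σε ^ 2 + ∑' p : ℕ × ℕ,
            a (k + 1 + p.1) * a (k + 1 + p.2) * σ ((p.2 : ℤ) - (p.1 : ℤ)) := by
  intro k hk
  -- stationarity in terms of σ
  have hXX : ∀ m n : ℤ, ⟪X m, X n⟫ = σ (n - m) := by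
    intro m n
    rw [aux_stationary σε ε hortho b X hX, hσ]
  have hσsymm : ∀ d : ℤ, σ (-d) = σ d := by
    intro d
    rw [hσ, real_inner_comm (X (-d)) (X 0), hXX]
    norm_num
  -- tail summability
  have hinj : Function.Injective (fun p : ℕ × ℕ => (p.1 + k, p.2 + k) : ℕ × ℕ → ℕ × ℕ) := by
    intro p q h
    simp only [Prod.mk.injEq, Prod.ext_iff] at h ⊢
    omega
  have hsummAbs : Summable fun p : ℕ × ℕ =>
      |a (k + 1 + p.1)| * |a (k + 1 + p.2)| * |σ ((p.2 : ℤ) - (p.1 : ℤ))| := by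
    have := habs.comp_injective hinj
    refine this.congr fun p => ?_
    simp only [Function.comp_apply]
    have e1 : 1 + (p.1 + k) = k + 1 + p.1 := by ring
    have e2 : 1 + (p.2 + k) = k + 1 + p.2 := by ring
    have e3 : ((p.2 + k : ℕ) : ℤ) - ((p.1 + k : ℕ) : ℤ) = (p.2 : ℤ) - (p.1 : ℤ) := by
      push_cast; ring
    rw [e1, e2, e3]
  refine ⟨hsummAbs, ?_⟩
  -- the summable (non-abs) version
  have hsumm : Summable fun p : ℕ × ℕ =>
      a (k + 1 + p.1) * a (k + 1 + p.2) * σ ((p.2 : ℤ) - (p.1 : ℤ)) := by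
    rw [← summable_abs_iff]
    refine hsummAbs.congr fun p => ?_
    rw [abs_mul, abs_mul]
  -- rewrite the finite sum as a range sum
  set f : ℕ → H := fun j => a j • X ((k : ℤ) + 1 - (j : ℤ)) with hf
  have hVeq : X ((k : ℤ) + 1) + ∑ j ∈ Finset.Icc 1 k, a j • X ((k : ℤ) + 1 - (j : ℤ))
      = ∑ j ∈ Finset.range (k + 1), f j := by
    have h01 : Finset.range (k + 1) = insert 0 (Finset.Icc 1 k) := by
      ext x
      simp [Finset.mem_range, Finset.mem_insert, Finset.mem_Icc]
      omega
    rw [h01, Finset.sum_insert (by simp)]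
    simp [hf, ha0]
  set V : H := ∑ j ∈ Finset.range (k + 1), f j with hV
  -- hasSum for X (k+1) via hε
  have hεk : HasSum f (ε ((k : ℤ) + 1)) := by
    exact hε ((k : ℤ) + 1)
  -- tail sum T
  have hT : HasSum (fun n : ℕ => f (n + (k + 1))) (ε ((k : ℤ) + 1) - V) :=
    (hasSum_nat_add_iff' (k + 1)).2 hεk
  set T : H := ε ((k : ℤ) + 1) - V with hTdef
  have hTsum : HasSum (fun n : ℕ => a (k + 1 + n) • X (-(n : ℤ))) T := by
    refine hT.congr_fun fun n => ?_
    simp only [hf]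
    have e1 : n + (k + 1) = k + 1 + n := by ring
    have e2 : (k : ℤ) + 1 - ((n + (k + 1) : ℕ) : ℤ) = -(n : ℤ) := by push_cast; ring
    rw [e2, e1]
  -- orthogonality: ⟪ε (k+1), X m⟫ = 0 for m ≤ 0
  have horth : ∀ n : ℕ, ⟪ε ((k : ℤ) + 1), X (-(n : ℤ))⟫ = 0 := by
    intro n
    rw [aux_inner_eps_X σε ε hortho b X hX, if_neg (by omega)]
  have hεT : ⟪ε ((k : ℤ) + 1), T⟫ = 0 := by
    have h := (innerSL ℝ (ε ((k : ℤ) + 1))).hasSum hTsum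
    simp only [innerSL_apply_apply, real_inner_smul_right] at h
    have : (fun n : ℕ => a (k + 1 + n) * ⟪ε ((k : ℤ) + 1), X (-(n : ℤ))⟫)
        = fun _ : ℕ => (0 : ℝ) := by
      funext n; rw [horth, mul_zero]
    rw [this] at h
    exact h.unique hasSum_zero
  -- norm of ε
  have hεnorm : ‖ε ((k : ℤ) + 1)‖ ^ 2 = σε ^ 2 := by
    rw [← real_inner_self_eq_norm_sq, hortho, if_pos rfl]
  -- ⟪T, T⟫ as double sum
  have hTT : ⟪T, T⟫ = ∑' p : ℕ × ℕ,
      a (k + 1 + p.1) * a (k + 1 + p.2) * σ ((p.2 : ℤ) - (p.1 : ℤ)) := by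
    have hrow : ∀ j : ℕ, ⟪X (-(j : ℤ)), T⟫
        = ∑' l : ℕ, a (k + 1 + l) * σ ((l : ℤ) - (j : ℤ)) := by
      intro j
      have h := (innerSL ℝ (X (-(j : ℤ)))).hasSum hTsum
      simp only [innerSL_apply_apply, real_inner_smul_right] at h
      have heq : (fun l : ℕ => a (k + 1 + l) * ⟪X (-(j : ℤ)), X (-(l : ℤ))⟫)
          = fun l : ℕ => a (k + 1 + l) * σ ((l : ℤ) - (j : ℤ)) := by
        funext l
        rw [hXX]
        have : -(l : ℤ) - -(j : ℤ) = -((l : ℤ) - (j : ℤ)) := by ring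
        rw [this, hσsymm]
      rw [heq] at h
      exact h.tsum_eq.symm
    have h := (innerSL ℝ T).hasSum hTsum
    simp only [innerSL_apply_apply, real_inner_smul_right] at h
    have heq : (fun j : ℕ => a (k + 1 + j) * ⟪T, X (-(j : ℤ))⟫)
        = fun j : ℕ => ∑' l : ℕ, a (k + 1 + j) * (a (k + 1 + l) * σ ((l : ℤ) - (j : ℤ))) := by
      funext j
      rw [real_inner_comm (X (-(j:ℤ))) T, hrow j, ← tsum_mul_left]
    rw [heq] at h
    rw [← h.tsum_eq]
    rw [Summable.tsum_prod' (hsumm.congr fun p => by ring) (fun j => ((hsumm.congr fun p => by ring).prod_factor j))]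
    exact tsum_congr fun j => tsum_congr fun l => by ring
  -- final computation
  rw [hVeq]
  have hVT : V = ε ((k : ℤ) + 1) - T := by
    rw [hTdef]; abel
  rw [hVT, norm_sub_sq_real, hεnorm, hεT, ← real_inner_self_eq_norm_sq, hTT]
  ring
end

section
/- For every absolutely summable real sequence (λ_j)_{j≥0}, the one-step linear predictor built from the infinite past satisfies ‖X_{k+1} − Σ_{j=0}^∞ λ_j X_{k−j}‖² ≥ σ_ε², and equality holds for the Wiener–Kolmogorov choice λ_j = −a_{j+1}, for which X_{k+1} − Σ_{j=0}^∞ λ_j X_{k−j} = ε_{k+1}. -/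
open scoped RealInnerProductSpace BigOperators

/-!
The Wiener–Kolmogorov predictor error is the innovation `ε_{k+1}`: splitting off the `j = 0`
term of `ε_{k+1} = ∑ a_j X_{k+1-j}` uses `a_0 = 1`. Each `X_m` with `m ≤ k` is a limit of
combinations of `ε_i`, `i ≤ k`, hence orthogonal to `ε_{k+1}`; so is the difference
`X_{k+1} - ε_{k+1} - S` of two predictors built from the past. Then
`X_{k+1} - S = ε_{k+1} + (X_{k+1} - ε_{k+1} - S)` is an orthogonal decomposition,
and Pythagoras gives `‖X_{k+1} - S‖² ≥ ‖ε_{k+1}‖² = σ_ε²`.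
-/

theorem inner_eq_zero_of_hasSum {𝕜 E ι : Type*} [RCLike 𝕜] [SeminormedAddCommGroup E]
    [InnerProductSpace 𝕜 E] {f : ι → E} {s x : E} (hf : HasSum f s)
    (h : ∀ i, inner 𝕜 x (f i) = 0) : inner 𝕜 x s = 0 := by
  have hmap := hf.mapL (innerSL 𝕜 x)
  simp only [innerSL_apply_apply, h] at hmap
  exact hmap.unique hasSum_zero

theorem HasSum.neg_tail_of_coeff_zero_eq_one {R M : Type*} [Ring R] [AddCommGroup M]
    [TopologicalSpace M] [IsTopologicalAddGroup M] [Module R M] {a : ℕ → R} {v : ℕ → M} {e : M}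
    (h : HasSum (fun j => a j • v j) e) (ha0 : a 0 = 1) :
    HasSum (fun j => -a (j + 1) • v (j + 1)) (v 0 - e) := by
  have htail := (hasSum_nat_add_iff' 1).mpr h
  simp only [Finset.range_one, Finset.sum_singleton, ha0, one_smul] at htail
  simpa only [neg_smul, neg_sub] using htail.neg

theorem norm_sq_le_norm_add_sq_of_inner_eq_zero {F : Type*} [SeminormedAddCommGroup F]
    [InnerProductSpace ℝ F] {x y : F} (h : ⟪x, y⟫ = 0) : ‖x‖ ^ 2 ≤ ‖x + y‖ ^ 2 := by
  rw [norm_add_sq_real, h]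
  nlinarith [sq_nonneg ‖y‖]

theorem inner_eq_zero_of_hasSum_past {H : Type*} [SeminormedAddCommGroup H]
    [InnerProductSpace ℝ H] {ε : ℤ → H} {b : ℕ → ℝ} {x : H} {m n : ℤ}
    (hortho : ∀ i j, i ≠ j → ⟪ε i, ε j⟫ = 0)
    (hx : HasSum (fun j : ℕ => b j • ε (m - j)) x) (hmn : m < n) : ⟪ε n, x⟫ = 0 :=
  inner_eq_zero_of_hasSum hx fun j => by
    rw [real_inner_smul_right, hortho n (m - j) (by omega), mul_zero]

theorem WK_predictor_optimality_general
    {H : Type*} [NormedAddCommGroup H] [InnerProductSpace ℝ H]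
    (σε : ℝ)
    (ε : ℤ → H)
    (hortho : ∀ m n : ℤ, ⟪ε m, ε n⟫ = if m = n then σε ^ 2 else 0)
    (a b : ℕ → ℝ) (ha0 : a 0 = 1)
    (X : ℤ → H)
    (hX : ∀ n : ℤ, HasSum (fun j : ℕ => b j • ε (n - (j : ℤ))) (X n))
    (hε : ∀ n : ℤ, HasSum (fun j : ℕ => a j • X (n - (j : ℤ))) (ε n))
    (k : ℤ) :
    (∀ lam : ℕ → ℝ, (Summable fun j => |lam j|) → ∀ S : H,
      HasSum (fun j : ℕ => lam j • X (k - (j : ℤ))) S →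
        σε ^ 2 ≤ ‖X (k + 1) - S‖ ^ 2) ∧
    HasSum (fun j : ℕ => (-(a (j + 1))) • X (k - (j : ℤ))) (X (k + 1) - ε (k + 1)) ∧
    ‖X (k + 1) - (X (k + 1) - ε (k + 1))‖ ^ 2 = σε ^ 2 := by
  have hnorm : ‖ε (k + 1)‖ ^ 2 = σε ^ 2 := by
    rw [← real_inner_self_eq_norm_sq, hortho, if_pos rfl]
  have hWK : HasSum (fun j : ℕ => (-(a (j + 1))) • X (k - (j : ℤ))) (X (k + 1) - ε (k + 1)) := by
    have h := (hε (k + 1)).neg_tail_of_coeff_zero_eq_one ha0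
    simpa only [Nat.cast_add, Nat.cast_one, CharP.cast_eq_zero, sub_zero,
      show ∀ j : ℤ, k + 1 - (j + 1) = k - j from fun j => by ring] using h
  have hpast : ∀ m, m ≤ k → ⟪ε (k + 1), X m⟫ = 0 := fun m hm =>
    inner_eq_zero_of_hasSum_past (fun i j hij => by rw [hortho, if_neg hij]) (hX m) (by omega)
  refine ⟨fun lam _ S hS => ?_, hWK, by rw [sub_sub_cancel, hnorm]⟩
  have horth : ⟪ε (k + 1), X (k + 1) - ε (k + 1) - S⟫ = 0 :=
    inner_eq_zero_of_hasSum (hWK.sub hS) fun j => by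
      rw [← sub_smul, real_inner_smul_right, hpast _ (by omega), mul_zero]
  calc σε ^ 2 = ‖ε (k + 1)‖ ^ 2 := hnorm.symm
    _ ≤ ‖ε (k + 1) + (X (k + 1) - ε (k + 1) - S)‖ ^ 2 :=
      norm_sq_le_norm_add_sq_of_inner_eq_zero horth
    _ = ‖X (k + 1) - S‖ ^ 2 := by congr 2; abel

/-- every one-step linear predictor built from the infinite past with
absolutely summable coefficients has mean-squared error at least `σ_ε²`, and equality
holds for the Wiener–Kolmogorov choice `λ_j = -a_{j+1}`, for which
`X_{k+1} - ∑_{j=0}^∞ λ_j X_{k-j} = ε_{k+1}`. -/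
theorem WK_predictor_optimality
    {H : Type*} [NormedAddCommGroup H] [InnerProductSpace ℝ H]
    (σε : ℝ) (hσε : 0 < σε)
    (ε : ℤ → H)
    (hortho : ∀ m n : ℤ, ⟪ε m, ε n⟫ = if m = n then σε ^ 2 else 0)
    (a b : ℕ → ℝ) (ha0 : a 0 = 1) (hb0 : b 0 = 1)
    (hb2 : Summable fun j => (b j) ^ 2)
    (ha1 : Summable fun j => |a j|)
    (X : ℤ → H)
    (hX : ∀ n : ℤ, HasSum (fun j : ℕ => b j • ε (n - (j : ℤ))) (X n))
    (hε : ∀ n : ℤ, HasSum (fun j : ℕ => a j • X (n - (j : ℤ))) (ε n))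
    (k : ℤ) :
    (∀ lam : ℕ → ℝ, (Summable fun j => |lam j|) → ∀ S : H,
      HasSum (fun j : ℕ => lam j • X (k - (j : ℤ))) S →
        σε ^ 2 ≤ ‖X (k + 1) - S‖ ^ 2) ∧
    HasSum (fun j : ℕ => (-(a (j + 1))) • X (k - (j : ℤ))) (X (k + 1) - ε (k + 1)) ∧
    ‖X (k + 1) - (X (k + 1) - ε (k + 1))‖ ^ 2 = σε ^ 2 :=
  WK_predictor_optimality_general σε ε hortho a b ha0 X hX hε k
end

section
/- Let d ∈ (0,1/2) and suppose the coefficients satisfy the long-memory decay conditions. Then the error of the best linear predictor of X_{k+1} from X_1,…,X_k (the fitted AR(k) model) satisfies: for every δ > 0 there is a constant C such that for all k ≥ 1, 0 ≤ inf_{(c_1,…,c_k) ∈ ℝ^k} ‖X_{k+1} − Σ_{j=1}^k c_j X_{k+1−j}‖² − σ_ε² ≤ C k^{−1+δ}. -/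
/-!
Every candidate residual `w = X_{k+1} - ∑ c_j X_{k-j}` has `⟪ε_{k+1}, w⟫ = σ²`, because
`ε_{k+1}` is orthogonal to `X_n` for `n ≤ k` and `b_0 = 1`; hence `‖w‖² = σ² + ‖w - ε_{k+1}‖²`,
which is the lower bound. For the upper bound take the truncated AR(∞) predictor
`c_j = -a_{j+1}`: then `ε_{k+1} - w = ∑_{i ≥ 0} a_{i+k+1} X_{-i}`, whose coefficients in the
orthogonal family `ε_{-p}` are bounded by the convolution of `|a_{·+k+1}|` with `|b|`. With
`α = d - 1 + δ'` and `β = -d - 1 + δ'` for a small `δ' > 0`, splitting each term of that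
convolution according to which index is at least half of `p + k + 1` bounds it by
`C k^(β+1) (p+k+1)^α`, and summing the squares over `p` gives `C k^(2α+2β+3) = C k^(-1+4δ')`.
-/

open scoped RealInnerProductSpace
open Real Finset

theorem sum_range_add_one_rpow_le {α : ℝ} (hα : -1 < α) (hα0 : α ≤ 0) (p : ℕ) :
    ∑ t ∈ range (p + 1), ((t : ℝ) + 1) ^ α ≤ ((p : ℝ) + 1) ^ (α + 1) / (α + 1) := by
  have hα1 : 0 < α + 1 := by linarith
  have hint : ∑ i ∈ range p, (1 + ((i + 1 : ℕ) : ℝ)) ^ α ≤ ∫ x in (1 : ℝ)..1 + p, x ^ α :=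
    ((antitoneOn_rpow_Ioi_of_exponent_nonpos hα0).mono
      fun x hx => lt_of_lt_of_le one_pos hx.1).sum_le_integral
  rw [integral_rpow (Or.inl hα), one_rpow] at hint
  have h1 : 1 ≤ 1 / (α + 1) := by rw [le_div_iff₀ hα1]; linarith
  rw [sum_range_succ']
  push_cast at hint ⊢
  calc ∑ i ∈ range p, ((i : ℝ) + 1 + 1) ^ α + (0 + 1) ^ α
      = ∑ i ∈ range p, (1 + ((i : ℝ) + 1)) ^ α + 1 := by
        simp only [zero_add, one_rpow, add_comm (1 : ℝ) ((_ : ℝ) + 1)]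
    _ ≤ ((1 + p) ^ (α + 1) - 1) / (α + 1) + 1 := by gcongr
    _ ≤ ((p : ℝ) + 1) ^ (α + 1) / (α + 1) := by
        rw [sub_div, add_comm (1 : ℝ) p]; linarith

theorem summable_add_rpow {γ : ℝ} (hγ : γ < -1) (k : ℕ) :
    Summable fun n : ℕ => ((n : ℝ) + k + 1) ^ γ := by
  have := (summable_nat_add_iff (k + 1)).2 (summable_nat_rpow.2 hγ)
  exact this.congr fun n => by push_cast; ring_nf

theorem tsum_add_rpow_le {γ : ℝ} (hγ : γ < -1) {k : ℕ} (hk : 0 < k) :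
    ∑' n : ℕ, ((n : ℝ) + k + 1) ^ γ ≤ (k : ℝ) ^ (γ + 1) / (-γ - 1) := by
  have hk' : (0 : ℝ) < k := by exact_mod_cast hk
  have h := AntitoneOn.tsum_comp_add_le_integral k
    ((antitoneOn_rpow_Ioi_of_exponent_nonpos (by linarith)).mono fun x hx => hk'.trans_le hx)
    (integrableOn_Ioi_rpow_of_lt hγ hk') fun t ht => rpow_nonneg (hk'.trans ht).le γ
  rw [integral_Ioi_rpow_of_lt hγ hk'] at h
  push_cast at h
  convert h using 1
  rw [div_eq_div_iff (by linarith) (by linarith)]; ring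

theorem div_two_rpow {x : ℝ} (hx : 0 ≤ x) (γ : ℝ) : (x / 2) ^ γ = (2 : ℝ) ^ (-γ) * x ^ γ := by
  rw [div_rpow hx zero_le_two, rpow_neg zero_le_two]; ring

/-- Since `K ≤ x + y`, one of `x`, `y` is at least `K / 2`. -/
theorem rpow_mul_rpow_le_add {x y K α β : ℝ} (hx : 0 < x) (hy : 0 < y) (hK : 0 < K)
    (hxy : K ≤ x + y) (hα : α ≤ 0) (hβ : β ≤ 0) :
    x ^ α * y ^ β ≤ (2 : ℝ) ^ (-α) * K ^ α * y ^ β + (2 : ℝ) ^ (-β) * K ^ β * x ^ α := by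
  have hxα := rpow_nonneg hx.le α
  have hyβ := rpow_nonneg hy.le β
  have h2 : 0 ≤ (2 : ℝ) ^ (-β) * K ^ β * x ^ α := by positivity
  have h2' : 0 ≤ (2 : ℝ) ^ (-α) * K ^ α * y ^ β := by positivity
  rcases le_total (K / 2) x with hKx | hKy
  · have := rpow_le_rpow_of_nonpos (by positivity) hKx hα
    rw [div_two_rpow hK.le] at this
    nlinarith
  · have := rpow_le_rpow_of_nonpos (by positivity) (show K / 2 ≤ y by linarith) hβ
    rw [div_two_rpow hK.le] at this
    nlinarith

def absConv (c b : ℕ → ℝ) (p : ℕ) : ℝ := ∑ j ∈ range (p + 1), |c j| * |b (p - j)|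

theorem absConv_nonneg (c b : ℕ → ℝ) (p : ℕ) : 0 ≤ absConv c b p :=
  sum_nonneg fun _ _ => by positivity

theorem exists_abs_le_mul_add_one_rpow {b : ℕ → ℝ} {α C : ℝ} (hα : α ≤ 0) (hb0 : |b 0| ≤ 1)
    (hb : ∀ j : ℕ, 1 ≤ j → |b j| ≤ C * (j : ℝ) ^ α) :
    ∃ B : ℝ, ∀ j : ℕ, |b j| ≤ B * ((j : ℝ) + 1) ^ α := by
  refine ⟨max (2 ^ (-α) * C) 1, fun j => ?_⟩
  rcases Nat.eq_zero_or_pos j with rfl | hj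
  · simpa using hb0.trans (le_max_right _ _)
  have hC : 0 ≤ C := by simpa using (abs_nonneg _).trans (hb 1 le_rfl)
  have hj' : (1 : ℝ) ≤ j := by exact_mod_cast hj
  calc |b j| ≤ C * (j : ℝ) ^ α := hb j hj
    _ ≤ C * (2 ^ (-α) * ((j : ℝ) + 1) ^ α) := by
        rw [← div_two_rpow (by positivity)]
        have hj2 : ((j : ℝ) + 1) / 2 ≤ j := by linarith
        exact mul_le_mul_of_nonneg_left (rpow_le_rpow_of_nonpos (by positivity) hj2 hα) hC
    _ ≤ max (2 ^ (-α) * C) 1 * ((j : ℝ) + 1) ^ α := by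
        rw [← mul_assoc, mul_comm C]
        gcongr
        exact le_max_left _ _

section TailConvolution

variable {α β A B : ℝ} {a b : ℕ → ℝ}

theorem absConv_tail_le_add (hα0 : α ≤ 0) (hβ : β ≤ 0)
    (ha : ∀ j : ℕ, 1 ≤ j → |a j| ≤ A * (j : ℝ) ^ β) (hb : ∀ j : ℕ, |b j| ≤ B * ((j : ℝ) + 1) ^ α)
    (k p : ℕ) :
    absConv (fun j => a (j + k + 1)) b p ≤
      A * B * ((2 : ℝ) ^ (-α) * ((p : ℝ) + k + 1) ^ α *
          ∑ j ∈ range (p + 1), ((j : ℝ) + k + 1) ^ β +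
        (2 : ℝ) ^ (-β) * ((p : ℝ) + k + 1) ^ β *
          ∑ j ∈ range (p + 1), (((p - j : ℕ) : ℝ) + 1) ^ α) := by
  have hA : 0 ≤ A := by simpa using (abs_nonneg _).trans (ha 1 le_rfl)
  have hB : 0 ≤ B := by simpa using (abs_nonneg _).trans (hb 0)
  rw [mul_sum, mul_sum, ← sum_add_distrib, mul_sum]
  refine sum_le_sum fun j hj => ?_
  have hjp : j ≤ p := Nat.lt_succ_iff.1 (mem_range.1 hj)
  calc |a (j + k + 1)| * |b (p - j)|
      ≤ (A * ((j : ℝ) + k + 1) ^ β) * (B * (((p - j : ℕ) : ℝ) + 1) ^ α) := by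
        refine mul_le_mul ?_ (hb _) (abs_nonneg _) (by positivity)
        simpa using ha (j + k + 1) (by omega)
    _ = A * B * ((((p - j : ℕ) : ℝ) + 1) ^ α * ((j : ℝ) + k + 1) ^ β) := by ring
    _ ≤ _ := by
        gcongr
        exact rpow_mul_rpow_le_add (by positivity) (by positivity) (by positivity)
          (by push_cast [hjp]; linarith) hα0 hβ

theorem absConv_tail_le (hα : -1 < α) (hα0 : α ≤ 0) (hβ : β < -1)
    (ha : ∀ j : ℕ, 1 ≤ j → |a j| ≤ A * (j : ℝ) ^ β) (hb : ∀ j : ℕ, |b j| ≤ B * ((j : ℝ) + 1) ^ α)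
    {k : ℕ} (hk : 1 ≤ k) (p : ℕ) :
    absConv (fun j => a (j + k + 1)) b p ≤
      A * B * ((2 : ℝ) ^ (-α) / (-β - 1) + (2 : ℝ) ^ (-β) / (α + 1)) *
        (k : ℝ) ^ (β + 1) * ((p : ℝ) + k + 1) ^ α := by
  have hA : 0 ≤ A := by simpa using (abs_nonneg _).trans (ha 1 le_rfl)
  have hB : 0 ≤ B := by simpa using (abs_nonneg _).trans (hb 0)
  have hk0 : (0 : ℝ) < k := by exact_mod_cast hk
  have hα1 : 0 < α + 1 := by linarith
  set K : ℝ := (p : ℝ) + k + 1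
  have hK : 0 < K := by positivity
  have hkK : (k : ℝ) ≤ K := by simp only [K]; linarith [(p.cast_nonneg : (0 : ℝ) ≤ p)]
  have hpK : (p : ℝ) + 1 ≤ K := by simp only [K]; linarith
  have hsumβ : ∑ j ∈ range (p + 1), ((j : ℝ) + k + 1) ^ β ≤ (k : ℝ) ^ (β + 1) / (-β - 1) :=
    ((summable_add_rpow hβ k).sum_le_tsum _ fun _ _ => by positivity).trans
      (tsum_add_rpow_le hβ hk)
  have hsumα : ∑ j ∈ range (p + 1), (((p - j : ℕ) : ℝ) + 1) ^ α ≤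
      ((p : ℝ) + 1) ^ (α + 1) / (α + 1) := by
    rw [← sum_range_reflect]
    refine le_of_eq_of_le (sum_congr rfl fun j hj => ?_) (sum_range_add_one_rpow_le hα hα0 p)
    rw [Nat.add_sub_cancel, Nat.sub_sub_self (Nat.lt_succ_iff.1 (mem_range.1 hj))]
  have hmix : ((p : ℝ) + 1) ^ (α + 1) * K ^ β ≤ K ^ α * (k : ℝ) ^ (β + 1) :=
    calc ((p : ℝ) + 1) ^ (α + 1) * K ^ β ≤ K ^ (α + 1) * K ^ β := by gcongr
      _ = K ^ α * K ^ (β + 1) := by rw [← rpow_add hK, ← rpow_add hK]; ring_nf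
      _ ≤ K ^ α * (k : ℝ) ^ (β + 1) :=
          mul_le_mul_of_nonneg_left (rpow_le_rpow_of_nonpos hk0 hkK (by linarith))
            (rpow_nonneg hK.le α)
  calc absConv (fun j => a (j + k + 1)) b p
      ≤ A * B * ((2 : ℝ) ^ (-α) * K ^ α * ((k : ℝ) ^ (β + 1) / (-β - 1)) +
          (2 : ℝ) ^ (-β) * K ^ β * (((p : ℝ) + 1) ^ (α + 1) / (α + 1))) := by
        refine (absConv_tail_le_add hα0 (by linarith) ha hb k p).trans ?_
        gcongr
    _ = A * B * ((2 : ℝ) ^ (-α) * K ^ α * ((k : ℝ) ^ (β + 1) / (-β - 1)) +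
          (2 : ℝ) ^ (-β) * (((p : ℝ) + 1) ^ (α + 1) * K ^ β) / (α + 1)) := by
        ring
    _ ≤ A * B * ((2 : ℝ) ^ (-α) * K ^ α * ((k : ℝ) ^ (β + 1) / (-β - 1)) +
          (2 : ℝ) ^ (-β) * (K ^ α * (k : ℝ) ^ (β + 1)) / (α + 1)) := by
        gcongr
    _ = _ := by ring

theorem exists_tsum_absConv_tail_sq_le (hα : -1 < α) (hα2 : 2 * α < -1) (hβ : β < -1)
    (ha : ∀ j : ℕ, 1 ≤ j → |a j| ≤ A * (j : ℝ) ^ β) (hb : ∀ j : ℕ, |b j| ≤ B * ((j : ℝ) + 1) ^ α) :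
    ∃ C : ℝ, 0 ≤ C ∧ ∀ k : ℕ, 1 ≤ k →
      Summable (fun p => absConv (fun j => a (j + k + 1)) b p ^ 2) ∧
      ∑' p, absConv (fun j => a (j + k + 1)) b p ^ 2 ≤ C * (k : ℝ) ^ (2 * α + 2 * β + 3) := by
  set D := A * B * ((2 : ℝ) ^ (-α) / (-β - 1) + (2 : ℝ) ^ (-β) / (α + 1))
  refine ⟨D ^ 2 / (-2 * α - 1), div_nonneg (sq_nonneg D) (by linarith), fun k hk => ?_⟩
  have hk0 : (0 : ℝ) < k := by exact_mod_cast hk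
  have hbound : ∀ p : ℕ, absConv (fun j => a (j + k + 1)) b p ^ 2 ≤
      D ^ 2 * (k : ℝ) ^ (2 * β + 2) * ((p : ℝ) + k + 1) ^ (2 * α) := fun p =>
    calc absConv (fun j => a (j + k + 1)) b p ^ 2
        ≤ (D * (k : ℝ) ^ (β + 1) * ((p : ℝ) + k + 1) ^ α) ^ 2 :=
          pow_le_pow_left₀ (absConv_nonneg _ _ _)
            (absConv_tail_le hα (by linarith) hβ ha hb hk p) 2
      _ = D ^ 2 * (k : ℝ) ^ (2 * β + 2) * ((p : ℝ) + k + 1) ^ (2 * α) := by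
          rw [mul_pow, mul_pow, ← rpow_mul_natCast hk0.le, ← rpow_mul_natCast (by positivity)]
          ring_nf
  have hmaj := (summable_add_rpow hα2 k).mul_left (D ^ 2 * (k : ℝ) ^ (2 * β + 2))
  have hsum : Summable (fun p => absConv (fun j => a (j + k + 1)) b p ^ 2) :=
    hmaj.of_nonneg_of_le (fun p => sq_nonneg _) hbound
  refine ⟨hsum, ?_⟩
  calc ∑' p, absConv (fun j => a (j + k + 1)) b p ^ 2
      ≤ ∑' p : ℕ, D ^ 2 * (k : ℝ) ^ (2 * β + 2) * ((p : ℝ) + k + 1) ^ (2 * α) :=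
        hsum.tsum_le_tsum hbound hmaj
    _ ≤ D ^ 2 * (k : ℝ) ^ (2 * β + 2) * ((k : ℝ) ^ (2 * α + 1) / (-2 * α - 1)) := by
        rw [tsum_mul_left]
        gcongr
        simpa using tsum_add_rpow_le hα2 hk
    _ = D ^ 2 / (-2 * α - 1) * ((k : ℝ) ^ (2 * β + 2) * (k : ℝ) ^ (2 * α + 1)) := by ring
    _ = D ^ 2 / (-2 * α - 1) * (k : ℝ) ^ (2 * α + 2 * β + 3) := by
        rw [← rpow_add hk0]; ring_nf

end TailConvolution

section OrthogonalExpansion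

variable {H : Type*} [NormedAddCommGroup H] [InnerProductSpace ℝ H] {ι : Type*}

theorem norm_sq_eq_norm_sq_add_norm_sub_sq {e w : H} (h : ⟪e, w⟫ = ‖e‖ ^ 2) :
    ‖w‖ ^ 2 = ‖e‖ ^ 2 + ‖w - e‖ ^ 2 := by
  rw [norm_sub_sq_real, real_inner_comm, h]; ring

theorem inner_eq_zero_of_hasSum_s10 {v : ι → H} {c : ι → ℝ} {x y : H}
    (hy : HasSum (fun i => c i • v i) y) (hx : ∀ i, ⟪x, v i⟫ = 0) : ⟪x, y⟫ = 0 := by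
  have h := hy.mapL (innerSL ℝ x)
  simp only [innerSL_apply_apply, inner_smul_right, hx, mul_zero] at h
  exact h.unique hasSum_zero

variable [DecidableEq ι] {e : ι → H} {s : ℝ} {c : ι → ℝ} {y : H}

theorem inner_eq_of_hasSum_orthogonal (he : ∀ i j, ⟪e i, e j⟫ = if i = j then s else 0)
    (hy : HasSum (fun i => c i • e i) y) (i : ι) : ⟪e i, y⟫ = s * c i := by
  have h := hy.mapL (innerSL ℝ (e i))
  simp only [innerSL_apply_apply, inner_smul_right, he, mul_ite, mul_zero] at h
  have hi := hasSum_single (f := fun j => if i = j then c j * s else 0) i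
    fun j hj => if_neg (Ne.symm hj)
  simpa [mul_comm] using h.unique hi

theorem hasSum_norm_sq_of_orthogonal (he : ∀ i j, ⟪e i, e j⟫ = if i = j then s else 0)
    (hy : HasSum (fun i => c i • e i) y) : HasSum (fun i => s * c i ^ 2) (‖y‖ ^ 2) := by
  have h := hy.mapL (innerSL ℝ y)
  simp only [innerSL_apply_apply, inner_smul_right, real_inner_self_eq_norm_sq] at h
  have hterm : ∀ i, c i * ⟪y, e i⟫ = s * c i ^ 2 := fun i => by
    rw [real_inner_comm, inner_eq_of_hasSum_orthogonal he hy]; ring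
  simpa only [hterm] using h

end OrthogonalExpansion

section LinearProcess

variable {H : Type*} [NormedAddCommGroup H] [InnerProductSpace ℝ H] {σ : ℝ} {ε X : ℤ → H}
  {a b : ℕ → ℝ}

theorem inner_eps_X_self (hortho : ∀ m n : ℤ, ⟪ε m, ε n⟫ = if m = n then σ ^ 2 else 0)
    (hX : ∀ n : ℤ, HasSum (fun j : ℕ => b j • ε (n - j)) (X n)) (n : ℤ) :
    ⟪ε n, X n⟫ = σ ^ 2 * b 0 := by
  have he : ∀ i j : ℕ, ⟪ε (n - i), ε (n - j)⟫ = if i = j then σ ^ 2 else 0 := fun i j => by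
    simp [hortho]
  simpa using inner_eq_of_hasSum_orthogonal he (hX n) 0

theorem inner_eps_X_of_lt (hortho : ∀ m n : ℤ, ⟪ε m, ε n⟫ = if m = n then σ ^ 2 else 0)
    (hX : ∀ n : ℤ, HasSum (fun j : ℕ => b j • ε (n - j)) (X n)) {m n : ℤ} (h : n < m) :
    ⟪ε m, X n⟫ = 0 :=
  inner_eq_zero_of_hasSum_s10 (hX n) fun j => by rw [hortho, if_neg (by omega)]

theorem hasSum_X_neg (hX : ∀ n : ℤ, HasSum (fun j : ℕ => b j • ε (n - j)) (X n)) (i : ℕ) :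
    HasSum (fun p : ℕ => (if i ≤ p then b (p - i) else 0) • ε (-p)) (X (-i)) := by
  refine (hasSum_nat_add_iff' i).1 ?_
  rw [sum_eq_zero fun p hp => by rw [if_neg (by simpa using hp), zero_smul], sub_zero]
  convert hX (-i) using 2 with p
  rw [if_pos (Nat.le_add_left i p), Nat.add_sub_cancel]
  push_cast; ring_nf

theorem abs_sum_mul_ite_le_absConv (c b : ℕ → ℝ) (N p : ℕ) :
    |∑ i ∈ range N, c i * (if i ≤ p then b (p - i) else 0)| ≤ absConv c b p := by
  set f : ℕ → ℝ := fun i => c i * if i ≤ p then b (p - i) else 0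
  calc |∑ i ∈ range N, f i| ≤ ∑ i ∈ range N, |f i| := abs_sum_le_sum_abs _ _
    _ ≤ ∑ i ∈ range N ∪ range (p + 1), |f i| :=
        sum_le_sum_of_subset_of_nonneg subset_union_left fun _ _ _ => abs_nonneg _
    _ = ∑ i ∈ range (p + 1), |f i| := by
        refine (sum_subset subset_union_right fun i _ hi => ?_).symm
        simp [f, if_neg (show ¬ i ≤ p by simpa [Nat.lt_succ_iff] using hi)]
    _ = absConv c b p := sum_congr rfl fun i hi => by
        simp [f, if_pos (Nat.lt_succ_iff.1 (mem_range.1 hi)), abs_mul]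

theorem norm_sq_le_of_hasSum_X_neg
    (hortho : ∀ m n : ℤ, ⟪ε m, ε n⟫ = if m = n then σ ^ 2 else 0)
    (hX : ∀ n : ℤ, HasSum (fun j : ℕ => b j • ε (n - j)) (X n)) {c : ℕ → ℝ} {R : H}
    (hR : HasSum (fun i : ℕ => c i • X (-i)) R) (hsum : Summable fun p => absConv c b p ^ 2) :
    ‖R‖ ^ 2 ≤ σ ^ 2 * ∑' p, absConv c b p ^ 2 := by
  have horth : ∀ p q : ℕ, ⟪ε (-p), ε (-q)⟫ = if p = q then σ ^ 2 else 0 := fun p q => by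
    simp [hortho]
  have hpartial : ∀ N, ‖∑ i ∈ range N, c i • X (-i)‖ ^ 2 ≤ σ ^ 2 * ∑' p, absConv c b p ^ 2 := by
    intro N
    have hexp : HasSum (fun p : ℕ => (∑ i ∈ range N, c i * if i ≤ p then b (p - i) else 0) •
        ε (-p)) (∑ i ∈ range N, c i • X (-i)) := by
      simpa only [sum_smul, smul_smul] using
        hasSum_sum fun i _ => (hasSum_X_neg hX i).const_smul (c i)
    have hn := hasSum_norm_sq_of_orthogonal horth hexp
    rw [← hn.tsum_eq, ← tsum_mul_left]
    refine hn.summable.tsum_le_tsum (fun p => ?_) (hsum.mul_left _)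
    exact mul_le_mul_of_nonneg_left
      (sq_le_sq.2 ((abs_sum_mul_ite_le_absConv c b N p).trans (le_abs_self _))) (sq_nonneg σ)
  exact le_of_tendsto (hR.tendsto_sum_nat.norm.pow 2) (Filter.Eventually.of_forall hpartial)

theorem norm_sq_prediction_error_eq
    (hortho : ∀ m n : ℤ, ⟪ε m, ε n⟫ = if m = n then σ ^ 2 else 0)
    (hX : ∀ n : ℤ, HasSum (fun j : ℕ => b j • ε (n - j)) (X n)) (hb0 : b 0 = 1)
    (k : ℕ) (c : Fin k → ℝ) :
    ‖X ((k : ℤ) + 1) - ∑ j : Fin k, c j • X ((k : ℤ) - ((j : ℕ) : ℤ))‖ ^ 2 =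
      σ ^ 2 +
        ‖X ((k : ℤ) + 1) - ∑ j : Fin k, c j • X ((k : ℤ) - ((j : ℕ) : ℤ)) - ε ((k : ℤ) + 1)‖ ^ 2 := by
  have hnorm : ‖ε ((k : ℤ) + 1)‖ ^ 2 = σ ^ 2 := by
    rw [← real_inner_self_eq_norm_sq, hortho, if_pos rfl]
  rw [← hnorm]
  refine norm_sq_eq_norm_sq_add_norm_sub_sq ?_
  rw [hnorm, inner_sub_right, inner_sum, inner_eps_X_self hortho hX, hb0, mul_one]
  simp [inner_smul_right, inner_eps_X_of_lt hortho hX]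

theorem hasSum_ar_remainder (hε : ∀ n : ℤ, HasSum (fun j : ℕ => a j • X (n - j)) (ε n))
    (ha0 : a 0 = 1) (k : ℕ) :
    HasSum (fun i : ℕ => a (i + k + 1) • X (-i)) (ε ((k : ℤ) + 1) -
      (X ((k : ℤ) + 1) - ∑ j : Fin k, -a ((j : ℕ) + 1) • X ((k : ℤ) - ((j : ℕ) : ℤ)))) := by
  have h := (hasSum_nat_add_iff' (k + 1)).2 (hε ((k : ℤ) + 1))
  convert h using 1
  · funext i; congr 2; push_cast; ring
  · rw [sum_range_succ', Fin.sum_univ_eq_sum_range (fun j => -a (j + 1) • X ((k : ℤ) - j)) k]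
    simpa [ha0, sum_neg_distrib] using add_comm _ _

theorem sq_le_iInf_norm_sq_prediction_error
    (hortho : ∀ m n : ℤ, ⟪ε m, ε n⟫ = if m = n then σ ^ 2 else 0)
    (hX : ∀ n : ℤ, HasSum (fun j : ℕ => b j • ε (n - j)) (X n)) (hb0 : b 0 = 1) (k : ℕ) :
    σ ^ 2 ≤ ⨅ c : Fin k → ℝ,
      ‖X ((k : ℤ) + 1) - ∑ j : Fin k, c j • X ((k : ℤ) - ((j : ℕ) : ℤ))‖ ^ 2 :=
  le_ciInf fun c => by
    rw [norm_sq_prediction_error_eq hortho hX hb0]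
    exact le_add_of_nonneg_right (sq_nonneg _)

theorem iInf_norm_sq_prediction_error_sub_le
    (hortho : ∀ m n : ℤ, ⟪ε m, ε n⟫ = if m = n then σ ^ 2 else 0)
    (hX : ∀ n : ℤ, HasSum (fun j : ℕ => b j • ε (n - j)) (X n))
    (hε : ∀ n : ℤ, HasSum (fun j : ℕ => a j • X (n - j)) (ε n)) (ha0 : a 0 = 1) (hb0 : b 0 = 1)
    {k : ℕ} (hsum : Summable fun p => absConv (fun j => a (j + k + 1)) b p ^ 2) :
    (⨅ c : Fin k → ℝ,
      ‖X ((k : ℤ) + 1) - ∑ j : Fin k, c j • X ((k : ℤ) - ((j : ℕ) : ℤ))‖ ^ 2) - σ ^ 2 ≤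
      σ ^ 2 * ∑' p, absConv (fun j => a (j + k + 1)) b p ^ 2 := by
  have hbdd : BddBelow (Set.range fun c : Fin k → ℝ =>
      ‖X ((k : ℤ) + 1) - ∑ j : Fin k, c j • X ((k : ℤ) - ((j : ℕ) : ℤ))‖ ^ 2) :=
    ⟨0, Set.forall_mem_range.2 fun _ => sq_nonneg _⟩
  refine (sub_le_sub_right (ciInf_le hbdd fun j => -a ((j : ℕ) + 1)) _).trans ?_
  rw [norm_sq_prediction_error_eq hortho hX hb0, add_sub_cancel_left, ← norm_neg, neg_sub]
  exact norm_sq_le_of_hasSum_X_neg hortho hX (hasSum_ar_remainder hε ha0 k) hsum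

end LinearProcess

theorem ar_k_fit_error_bound_general
    {H : Type*} [NormedAddCommGroup H] [InnerProductSpace ℝ H]
    (d : ℝ) (hd : 0 < d) (hd' : d < 1 / 2)
    (σε : ℝ)
    (ε : ℤ → H)
    (hortho : ∀ m n : ℤ, ⟪ε m, ε n⟫ = if m = n then σε ^ 2 else 0)
    (a b : ℕ → ℝ) (ha0 : a 0 = 1) (hb0 : b 0 = 1)
    (X : ℤ → H)
    (hX : ∀ n : ℤ, HasSum (fun j : ℕ => b j • ε (n - (j : ℤ))) (X n))
    (hε : ∀ n : ℤ, HasSum (fun j : ℕ => a j • X (n - (j : ℤ))) (ε n))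
    (hdecay : ∀ δ : ℝ, 0 < δ → ∃ C₁ C₂ : ℝ, ∀ j : ℕ, 1 ≤ j →
      |a j| ≤ C₁ * (j : ℝ) ^ (-d - 1 + δ) ∧ |b j| ≤ C₂ * (j : ℝ) ^ (d - 1 + δ)) :
    ∀ δ : ℝ, 0 < δ → ∃ C : ℝ, ∀ k : ℕ, 1 ≤ k →
      0 ≤ (⨅ c : Fin k → ℝ,
            ‖X ((k : ℤ) + 1) - ∑ j : Fin k, c j • X ((k : ℤ) - ((j : ℕ) : ℤ))‖ ^ 2) - σε ^ 2 ∧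
      (⨅ c : Fin k → ℝ,
            ‖X ((k : ℤ) + 1) - ∑ j : Fin k, c j • X ((k : ℤ) - ((j : ℕ) : ℤ))‖ ^ 2) - σε ^ 2
        ≤ C * (k : ℝ) ^ (-1 + δ) := by
  intro δ hδ
  set δ' := min (δ / 4) (min (d / 2) ((1 - 2 * d) / 4))
  have hδ'δ : δ' ≤ δ / 4 := min_le_left _ _
  have hδ'd : δ' ≤ d / 2 := (min_le_right _ _).trans (min_le_left _ _)
  have hδ'd' : δ' ≤ (1 - 2 * d) / 4 := (min_le_right _ _).trans (min_le_right _ _)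
  have hδ' : 0 < δ' := lt_min (by linarith) (lt_min (by linarith) (by linarith))
  obtain ⟨C₁, C₂, hC⟩ := hdecay δ' hδ'
  obtain ⟨B, hB⟩ := exists_abs_le_mul_add_one_rpow (by linarith) (by simp [hb0])
    fun j hj => (hC j hj).2
  obtain ⟨C, hC0, hconv⟩ := exists_tsum_absConv_tail_sq_le (by linarith) (by linarith)
    (by linarith) (fun j hj => (hC j hj).1) hB
  refine ⟨σε ^ 2 * C, fun k hk => ?_⟩
  obtain ⟨hsum, htsum⟩ := hconv k hk
  refine ⟨sub_nonneg.2 (sq_le_iInf_norm_sq_prediction_error hortho hX hb0 k), ?_⟩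
  calc _ ≤ σε ^ 2 * ∑' p, absConv (fun j => a (j + k + 1)) b p ^ 2 :=
        iInf_norm_sq_prediction_error_sub_le hortho hX hε ha0 hb0 hsum
    _ ≤ σε ^ 2 * (C * (k : ℝ) ^ (-1 + δ)) := by
        gcongr
        refine htsum.trans (mul_le_mul_of_nonneg_left ?_ hC0)
        exact rpow_le_rpow_of_exponent_le (by exact_mod_cast hk) (by linarith)
    _ = σε ^ 2 * C * (k : ℝ) ^ (-1 + δ) := by ring

/-- for a long-memory linear process with coefficients satisfying the
long-memory decay conditions, the excess mean-squared error of the best linear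
predictor of `X_{k+1}` from `X_1, …, X_k` (the fitted AR(k) model) is nonnegative and,
for every `δ > 0`, bounded by `C k^{-1+δ}`. -/
theorem ar_k_fit_error_bound
    {H : Type*} [NormedAddCommGroup H] [InnerProductSpace ℝ H]
    (d : ℝ) (hd : 0 < d) (hd' : d < 1 / 2)
    (σε : ℝ) (hσε : 0 < σε)
    (ε : ℤ → H)
    (hortho : ∀ m n : ℤ, ⟪ε m, ε n⟫ = if m = n then σε ^ 2 else 0)
    (a b : ℕ → ℝ) (ha0 : a 0 = 1) (hb0 : b 0 = 1)
    (hb2 : Summable fun j => (b j) ^ 2)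
    (ha1 : Summable fun j => |a j|)
    (X : ℤ → H)
    (hX : ∀ n : ℤ, HasSum (fun j : ℕ => b j • ε (n - (j : ℤ))) (X n))
    (hε : ∀ n : ℤ, HasSum (fun j : ℕ => a j • X (n - (j : ℤ))) (ε n))
    (hdecay : ∀ δ : ℝ, 0 < δ → ∃ C₁ C₂ : ℝ, ∀ j : ℕ, 1 ≤ j →
      |a j| ≤ C₁ * (j : ℝ) ^ (-d - 1 + δ) ∧ |b j| ≤ C₂ * (j : ℝ) ^ (d - 1 + δ)) :
    ∀ δ : ℝ, 0 < δ → ∃ C : ℝ, ∀ k : ℕ, 1 ≤ k →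
      0 ≤ (⨅ c : Fin k → ℝ,
            ‖X ((k : ℤ) + 1) - ∑ j : Fin k, c j • X ((k : ℤ) - ((j : ℕ) : ℤ))‖ ^ 2) - σε ^ 2 ∧
      (⨅ c : Fin k → ℝ,
            ‖X ((k : ℤ) + 1) - ∑ j : Fin k, c j • X ((k : ℤ) - ((j : ℕ) : ℤ))‖ ^ 2) - σε ^ 2
        ≤ C * (k : ℝ) ^ (-1 + δ) :=
  ar_k_fit_error_bound_general d hd hd' σε ε hortho a b ha0 hb0 X hX hε hdecay
end

section
/- For fractionally integrated noise F(d) with d ∈ (0,1/2) and all integers 1 ≤ j ≤ k: the Yule–Walker AR(k) coefficient satisfies the product identity a_{j,k} = a_j · ∏_{m=0}^{j−1} (k−m)/(k−d−m), and consequently a_j − a_{j,k} > 0 (i.e. a_{j,k} < a_j < 0). -/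
open scoped BigOperators

/-- AR(∞) coefficients of fractionally integrated noise F(d):
`a_j = Γ(j-d)/(Γ(j+1)Γ(-d))` for `j ≥ 1` (and `a_0 = 1`). -/
noncomputable def fiAR (d : ℝ) (j : ℕ) : ℝ :=
  if j = 0 then 1
  else Real.Gamma ((j : ℝ) - d) / (Real.Gamma ((j : ℝ) + 1) * Real.Gamma (-d))

/-- Signed Yule–Walker AR(k) coefficients of F(d), for `1 ≤ j ≤ k`:
`a_{j,k} = Γ(k+1)Γ(j-d)Γ(k-d-j+1)/(Γ(k-j+1)Γ(j+1)Γ(-d)Γ(k-d+1))`. -/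
noncomputable def fiYW (d : ℝ) (j k : ℕ) : ℝ :=
  Real.Gamma ((k : ℝ) + 1) * Real.Gamma ((j : ℝ) - d) * Real.Gamma ((k : ℝ) - d - (j : ℝ) + 1) /
    (Real.Gamma ((k : ℝ) - (j : ℝ) + 1) * Real.Gamma ((j : ℝ) + 1) * Real.Gamma (-d) *
      Real.Gamma ((k : ℝ) - d + 1))

/-! The identity is `Γ(x + 1) = x (x - 1) ⋯ (x - j + 1) Γ(x - j + 1)`, applied at `x = k` and
`x = k - d`. For `0 < d < 1` every factor `(k - m)/(k - d - m)` exceeds `1` and `Γ(-d) < 0`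
while the other Gamma values are positive, so `a_j < 0` and multiplying it by a product
exceeding `1` makes it smaller. -/

namespace Real

theorem Gamma_add_one_eq_prod_mul_Gamma (x : ℝ) (j : ℕ) (hx : ∀ m < j, x - m ≠ 0) :
    Gamma (x + 1) = (∏ m ∈ Finset.range j, (x - m)) * Gamma (x - j + 1) := by
  induction j with
  | zero => simp
  | succ n ih =>
    have hxn : x - n ≠ 0 := hx n n.lt_succ_self
    calc Gamma (x + 1) = (∏ m ∈ Finset.range n, (x - m)) * Gamma (x - n + 1) :=
          ih fun m hm => hx m (hm.trans n.lt_succ_self)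
      _ = (∏ m ∈ Finset.range n, (x - m)) * ((x - n) * Gamma (x - n)) := by
          rw [Gamma_add_one hxn]
      _ = (∏ m ∈ Finset.range (n + 1), (x - m)) * Gamma (x - ↑(n + 1) + 1) := by
          rw [Finset.prod_range_succ]; push_cast; ring_nf

theorem Gamma_neg_of_mem_Ioo {d : ℝ} (hd : d ∈ Set.Ioo 0 1) : Gamma (-d) < 0 := by
  have hpos : 0 < Gamma (-d + 1) := Gamma_pos_of_pos (by linarith [hd.2])
  rw [Gamma_add_one (neg_ne_zero.mpr hd.1.ne')] at hpos
  exact neg_of_mul_pos_right hpos (by linarith [hd.1])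

end Real

theorem fiYW_eq_fiAR_mul_prod {d : ℝ} (hd : ∀ n : ℕ, d ≠ n) {j k : ℕ} (hj : j ≠ 0)
    (hjk : j ≤ k) :
    fiYW d j k = fiAR d j * ∏ m ∈ Finset.range j, (((k : ℝ) - m) / ((k : ℝ) - d - m)) := by
  have hkj : ((k - j : ℕ) : ℝ) = k - j := Nat.cast_sub hjk
  have hk_sub : ∀ m < j, (k : ℝ) - m ≠ 0 := fun m hm => by
    rw [sub_ne_zero]; exact_mod_cast (hm.trans_le hjk).ne'
  have hkd_sub : ∀ m < j, (k : ℝ) - d - m ≠ 0 := fun m hm h =>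
    hd (k - m) (by rw [Nat.cast_sub (hm.trans_le hjk).le]; linarith)
  have hGk : Real.Gamma ((k : ℝ) - j + 1) ≠ 0 :=
    (Real.Gamma_pos_of_pos (by rw [← hkj]; positivity)).ne'
  have hGkd : Real.Gamma ((k : ℝ) - d - j + 1) ≠ 0 := Real.Gamma_ne_zero fun n h =>
    hd (k - j + 1 + n) (by push_cast; rw [hkj]; linarith)
  have hQ : ∏ m ∈ Finset.range j, ((k : ℝ) - d - m) ≠ 0 :=
    Finset.prod_ne_zero_iff.mpr fun m hm => hkd_sub m (Finset.mem_range.mp hm)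
  rw [fiYW, fiAR, if_neg hj, Finset.prod_div_distrib,
    Real.Gamma_add_one_eq_prod_mul_Gamma _ j hk_sub,
    Real.Gamma_add_one_eq_prod_mul_Gamma _ j hkd_sub]
  field_simp

theorem fiAR_neg {d : ℝ} (hd : d ∈ Set.Ioo 0 1) {j : ℕ} (hj : j ≠ 0) : fiAR d j < 0 := by
  have hj1 : (1 : ℝ) ≤ j := by exact_mod_cast Nat.one_le_iff_ne_zero.mpr hj
  rw [fiAR, if_neg hj]
  exact div_neg_of_pos_of_neg (Real.Gamma_pos_of_pos (by linarith [hd.2]))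
    (mul_neg_of_pos_of_neg (Real.Gamma_pos_of_pos (by positivity)) (Real.Gamma_neg_of_mem_Ioo hd))

theorem one_lt_prod_sub_div_sub_sub {d : ℝ} (hd : d ∈ Set.Ioo 0 1) {j k : ℕ} (hj : j ≠ 0)
    (hjk : j ≤ k) :
    1 < ∏ m ∈ Finset.range j, (((k : ℝ) - m) / ((k : ℝ) - d - m)) := by
  have hfactor : ∀ m ∈ Finset.range j, 1 < ((k : ℝ) - m) / ((k : ℝ) - d - m) := by
    intro m hm
    have hmk : (m : ℝ) + 1 ≤ k := by exact_mod_cast (Finset.mem_range.mp hm).trans_le hjk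
    rw [one_lt_div (by linarith [hd.2])]
    linarith [hd.1]
  simpa using Finset.prod_lt_prod_of_nonempty (fun _ _ => one_pos) hfactor
    (Finset.nonempty_range_iff.mpr hj)

/-- for F(d) with `d ∈ (0,1/2)` and `1 ≤ j ≤ k`,
`a_{j,k} = a_j ∏_{m=0}^{j-1} (k-m)/(k-d-m)`, and consequently `a_{j,k} < a_j < 0`. -/
theorem fiYW_product_identity_and_sign
    (d : ℝ) (hd : 0 < d) (hd' : d < 1 / 2)
    (j k : ℕ) (hj : 1 ≤ j) (hjk : j ≤ k) :
    fiYW d j k = fiAR d j * ∏ m ∈ Finset.range j, (((k : ℝ) - m) / ((k : ℝ) - d - m)) ∧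
    fiYW d j k < fiAR d j ∧ fiAR d j < 0 := by
  have hd01 : d ∈ Set.Ioo 0 1 := ⟨hd, by linarith⟩
  have hj0 : j ≠ 0 := Nat.one_le_iff_ne_zero.mp hj
  have hd_nat : ∀ n : ℕ, d ≠ n := fun n h => by
    rcases Nat.eq_zero_or_pos n with rfl | hn
    · simp_all
    · have : (1 : ℝ) ≤ n := by exact_mod_cast hn
      linarith
  have hid := fiYW_eq_fiAR_mul_prod hd_nat hj0 hjk
  have hneg := fiAR_neg hd01 hj0
  refine ⟨hid, ?_, hneg⟩
  rw [hid]
  simpa using mul_lt_mul_of_neg_left (one_lt_prod_sub_div_sub_sub hd01 hj0 hjk) hneg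
end

section
/- Let (b_j)_{j≥0} be a square-summable real sequence and (a_j)_{j≥0} an absolutely summable real sequence with a_0 = b_0 = 1 and Σ_{i=0}^n a_i b_{n−i} = 0 for every n ≥ 1 (i.e. the power series A(z) = Σ a_j z^j and B(z) = Σ b_j z^j satisfy A·B = 1). Define σ(m) := Σ_{u=0}^∞ b_u b_{u+|m|} for m ∈ ℤ. Then for every integer j ≥ 1, Σ_{l=0}^∞ a_l σ(l−j) = 0 (the series converging absolutely). -/
open scoped BigOperators

/-- zero extension of a sequence to `ℤ` -/
noncomputable def zext (b : ℕ → ℝ) : ℤ → ℝ := fun k => if 0 ≤ k then b k.toNat else 0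

lemma zext_coe (b : ℕ → ℝ) (n : ℕ) : zext b (n : ℤ) = b n := by
  simp [zext]

lemma zext_neg (b : ℕ → ℝ) {k : ℤ} (h : k < 0) : zext b k = 0 := by
  simp [zext, not_le.mpr h]

lemma zext_shift (b : ℕ → ℝ) (l n : ℕ) :
    zext b ((n + l : ℕ) - (l : ℤ)) = b n := by
  have : ((n + l : ℕ) : ℤ) - (l : ℤ) = (n : ℤ) := by push_cast; ring
  rw [this, zext_coe]

/-- summability and value of the shifted squares -/
lemma sq_shift (b : ℕ → ℝ) (hb2 : Summable fun j => (b j) ^ 2) (l : ℕ) :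
    Summable (fun n : ℕ => (zext b ((n : ℤ) - l)) ^ 2) ∧
    ∑' n : ℕ, (zext b ((n : ℤ) - l)) ^ 2 = ∑' j, (b j) ^ 2 := by
  have hshift : ∀ n : ℕ, (zext b (((n + l : ℕ) : ℤ) - l)) ^ 2 = (b n) ^ 2 := by
    intro n; rw [zext_shift]
  have hsum : Summable (fun n : ℕ => (zext b ((n : ℤ) - l)) ^ 2) := by
    refine (summable_nat_add_iff l).mp ?_
    simpa only [hshift] using hb2
  refine ⟨hsum, ?_⟩
  have h := Summable.sum_add_tsum_nat_add (f := fun n : ℕ => (zext b ((n : ℤ) - l)) ^ 2) l hsum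
  have hz : ∑ i ∈ Finset.range l, (zext b ((i : ℤ) - l)) ^ 2 = 0 := by
    apply Finset.sum_eq_zero
    intro i hi
    have hi' : (i : ℤ) - l < 0 := by
      have := Finset.mem_range.mp hi; omega
    rw [zext_neg b hi']
    ring
  rw [hz, zero_add] at h
  rw [← h]
  exact tsum_congr fun n => (hshift n)

/-- Cauchy-Schwarz-ish bound for products of shifted sequences -/
lemma prod_shift (b : ℕ → ℝ) (hb2 : Summable fun j => (b j) ^ 2) (l j : ℕ) :
    Summable (fun n : ℕ => |zext b ((n : ℤ) - l) * zext b ((n : ℤ) - j)|) ∧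
    ∑' n : ℕ, |zext b ((n : ℤ) - l) * zext b ((n : ℤ) - j)| ≤ ∑' i, (b i) ^ 2 := by
  obtain ⟨hl, hlv⟩ := sq_shift b hb2 l
  obtain ⟨hj, hjv⟩ := sq_shift b hb2 j
  have hb : ∀ n : ℕ, |zext b ((n : ℤ) - l) * zext b ((n : ℤ) - j)| ≤
      ((zext b ((n : ℤ) - l)) ^ 2 + (zext b ((n : ℤ) - j)) ^ 2) / 2 := by
    intro n
    set x := zext b ((n : ℤ) - l); set y := zext b ((n : ℤ) - j)
    rw [abs_mul]
    nlinarith [sq_nonneg (|x| - |y|), abs_nonneg x, abs_nonneg y, sq_abs x, sq_abs y]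
  have hsum2 : Summable (fun n : ℕ =>
      ((zext b ((n : ℤ) - l)) ^ 2 + (zext b ((n : ℤ) - j)) ^ 2) / 2) :=
    (hl.add hj).div_const 2
  have hs : Summable (fun n : ℕ => |zext b ((n : ℤ) - l) * zext b ((n : ℤ) - j)|) :=
    Summable.of_nonneg_of_le (fun n => abs_nonneg _) hb hsum2
  refine ⟨hs, ?_⟩
  calc ∑' n : ℕ, |zext b ((n : ℤ) - l) * zext b ((n : ℤ) - j)|
      ≤ ∑' n : ℕ, ((zext b ((n : ℤ) - l)) ^ 2 + (zext b ((n : ℤ) - j)) ^ 2) / 2 :=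
        Summable.tsum_le_tsum hb hs hsum2
    _ = (∑' i, (b i) ^ 2 + ∑' i, (b i) ^ 2) / 2 := by
        rw [tsum_div_const, Summable.tsum_add hl hj, hlv, hjv]
    _ = ∑' i, (b i) ^ 2 := by ring

/-- rewriting σ as a sum over shifted zero-extensions -/
lemma sigma_eq (b : ℕ → ℝ) (l j : ℕ) :
    ∑' u : ℕ, b u * b (u + ((l : ℤ) - j).natAbs) =
    ∑' n : ℕ, zext b ((n : ℤ) - l) * zext b ((n : ℤ) - j) := by
  set m := max l j with hm
  have hinj : Function.Injective (fun u : ℕ => u + m) := add_left_injective m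
  have hsupp : Function.support (fun n : ℕ => zext b ((n : ℤ) - l) * zext b ((n : ℤ) - j))
      ⊆ Set.range (fun u : ℕ => u + m) := by
    intro n hn
    by_contra hr
    have hnm : n < m := by
      by_contra h
      exact hr ⟨n - m, show n - m + m = n by omega⟩
    apply hn
    rcases lt_or_ge n l with h | h
    · have : zext b ((n : ℤ) - l) = 0 := zext_neg b (by omega)
      simp [this]
    · have : zext b ((n : ℤ) - j) = 0 := zext_neg b (by omega)
      simp [this, (by omega : (n:ℤ) - j < 0)]
  rw [← Function.Injective.tsum_eq hinj hsupp]
  apply tsum_congr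
  intro u
  rcases le_total l j with h | h
  · have hmj : m = j := by omega
    have h1 : zext b (((u + m : ℕ) : ℤ) - l) = b (u + (j - l)) := by
      have : ((u + m : ℕ) : ℤ) - l = ((u + (j - l) : ℕ) : ℤ) := by omega
      rw [this, zext_coe]
    have h2 : zext b (((u + m : ℕ) : ℤ) - j) = b u := by
      rw [hmj]; exact zext_shift b j u
    have h3 : ((l : ℤ) - j).natAbs = j - l := by omega
    rw [h1, h2, h3, mul_comm]
  · have hml : m = l := by omega
    have h1 : zext b (((u + m : ℕ) : ℤ) - l) = b u := by
      rw [hml]; exact zext_shift b l u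
    have h2 : zext b (((u + m : ℕ) : ℤ) - j) = b (u + (l - j)) := by
      have : ((u + m : ℕ) : ℤ) - j = ((u + (l - j) : ℕ) : ℤ) := by omega
      rw [this, zext_coe]
    have h3 : ((l : ℤ) - j).natAbs = l - j := by omega
    rw [h1, h2, h3]

/-- if `(a_j)` is absolutely summable, `(b_j)` square-summable,
`a_0 = b_0 = 1` and `∑_{i=0}^n a_i b_{n-i} = 0` for all `n ≥ 1` (i.e. `A·B = 1` as formal
power series), then with `σ(m) = ∑_{u=0}^∞ b_u b_{u+|m|}` one has, for every `j ≥ 1`,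
`∑_{l=0}^∞ a_l σ(l-j) = 0`, the series converging absolutely. -/
theorem innovation_orthogonality
    (a b : ℕ → ℝ) (ha0 : a 0 = 1) (hb0 : b 0 = 1)
    (hb2 : Summable fun j => (b j) ^ 2)
    (ha1 : Summable fun j => |a j|)
    (hAB : ∀ n : ℕ, 1 ≤ n → ∑ i ∈ Finset.range (n + 1), a i * b (n - i) = 0)
    (σ : ℤ → ℝ)
    (hσ : ∀ m : ℤ, σ m = ∑' u : ℕ, b u * b (u + m.natAbs)) :
    ∀ j : ℕ, 1 ≤ j →
      (Summable fun l : ℕ => |a l * σ ((l : ℤ) - (j : ℤ))|) ∧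
      ∑' l : ℕ, a l * σ ((l : ℤ) - (j : ℤ)) = 0 := by
  intro j hj
  set B2 := ∑' i, (b i) ^ 2 with hB2
  have hB2nn : 0 ≤ B2 := tsum_nonneg fun i => sq_nonneg _
  -- σ rewritten
  have hσ' : ∀ l : ℕ, σ ((l : ℤ) - j) = ∑' n : ℕ, zext b ((n : ℤ) - l) * zext b ((n : ℤ) - j) := by
    intro l
    rw [hσ, sigma_eq]
  -- bound on |σ|
  have hσbd : ∀ l : ℕ, |σ ((l : ℤ) - j)| ≤ B2 := by
    intro l
    obtain ⟨hs, hv⟩ := prod_shift b hb2 l j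
    rw [hσ' l]
    calc |∑' n : ℕ, zext b ((n : ℤ) - l) * zext b ((n : ℤ) - j)|
        ≤ ∑' n : ℕ, |zext b ((n : ℤ) - l) * zext b ((n : ℤ) - j)| := by
          have h1 : Summable fun n : ℕ => ‖zext b ((n : ℤ) - l) * zext b ((n : ℤ) - j)‖ := by
            simp only [Real.norm_eq_abs]; exact hs
          have h2 := norm_tsum_le_tsum_norm
            (f := fun n : ℕ => zext b ((n : ℤ) - l) * zext b ((n : ℤ) - j)) h1
          simp only [Real.norm_eq_abs] at h2
          exact h2
      _ ≤ B2 := hv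
  -- part 1
  have habs : Summable fun l : ℕ => |a l * σ ((l : ℤ) - (j : ℤ))| := by
    refine Summable.of_nonneg_of_le (fun l => abs_nonneg _) ?_ (ha1.mul_right B2)
    intro l
    rw [abs_mul]
    exact mul_le_mul_of_nonneg_left (hσbd l) (abs_nonneg _)
  refine ⟨habs, ?_⟩
  -- double sum
  set F : ℕ → ℕ → ℝ := fun l n => a l * (zext b ((n : ℤ) - l) * zext b ((n : ℤ) - j)) with hF
  have hFeq : ∀ l n : ℕ, |F l n| = |a l| * |zext b ((n : ℤ) - l) * zext b ((n : ℤ) - j)| := by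
    intro l n
    simp only [hF]
    exact abs_mul _ _
  have hFrow : ∀ l : ℕ, Summable fun n => |F l n| := by
    intro l
    simp only [hFeq]
    exact ((prod_shift b hb2 l j).1.mul_left _)
  have hFrowbd : ∀ l : ℕ, ∑' n, |F l n| ≤ |a l| * B2 := by
    intro l
    calc ∑' n, |F l n|
        = ∑' n : ℕ, |a l| * |zext b ((n : ℤ) - l) * zext b ((n : ℤ) - j)| :=
          tsum_congr fun n => hFeq l n
      _ = |a l| * ∑' n : ℕ, |zext b ((n : ℤ) - l) * zext b ((n : ℤ) - j)| := tsum_mul_left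
      _ ≤ |a l| * B2 := by
          rw [hB2]
          exact mul_le_mul_of_nonneg_left (prod_shift b hb2 l j).2 (abs_nonneg _)
  have hFabs : Summable fun p : ℕ × ℕ => |F p.1 p.2| := by
    rw [summable_prod_of_nonneg (fun p => abs_nonneg _)]
    refine ⟨hFrow, ?_⟩
    refine Summable.of_nonneg_of_le (fun l => tsum_nonneg fun n => abs_nonneg _) hFrowbd
      (ha1.mul_right B2)
  have hFsum : Summable (Function.uncurry F) := by
    refine Summable.of_abs ?_
    simpa [Function.uncurry] using hFabs
  -- inner sum over l
  have hinner : ∀ n : ℕ, ∑' l : ℕ, F l n = zext b ((n : ℤ) - j) * (if n = 0 then 1 else 0) := by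
    intro n
    have hz : ∀ l : ℕ, l ∉ Finset.range (n + 1) → F l n = 0 := by
      intro l hl
      have : (n : ℤ) - l < 0 := by
        have := Finset.mem_range.not.mp hl
        omega
      simp [hF, zext_neg b this]
    rw [tsum_eq_sum hz]
    have hval : ∀ l ∈ Finset.range (n + 1), F l n = zext b ((n : ℤ) - j) * (a l * b (n - l)) := by
      intro l hl
      have : zext b ((n : ℤ) - l) = b (n - l) := by
        have hle : l ≤ n := Nat.lt_succ_iff.mp (Finset.mem_range.mp hl)
        have : (n : ℤ) - l = ((n - l : ℕ) : ℤ) := by omega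
        rw [this, zext_coe]
      simp only [hF]
      rw [this]; ring
    rw [Finset.sum_congr rfl hval, ← Finset.mul_sum]
    congr 1
    rcases Nat.eq_zero_or_pos n with h0 | hpos
    · subst h0; simp [ha0, hb0]
    · rw [hAB n hpos, if_neg (by omega)]
  -- the swap
  have hσsum : ∀ l : ℕ, Summable fun n => F l n :=
    fun l => Summable.of_abs (hFrow l)
  calc ∑' l : ℕ, a l * σ ((l : ℤ) - (j : ℤ))
      = ∑' l : ℕ, ∑' n : ℕ, F l n := by
        apply tsum_congr; intro l
        rw [hσ' l, hF]
        exact (tsum_mul_left).symm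
    _ = ∑' n : ℕ, ∑' l : ℕ, F l n := (Summable.tsum_comm hFsum).symm
    _ = ∑' n : ℕ, zext b ((n : ℤ) - j) * (if n = 0 then 1 else 0) := tsum_congr hinner
    _ = 0 := by
        rw [tsum_eq_single 0 (by intro n hn; simp [hn])]
        have h0 : zext b (-(j : ℤ)) = 0 := zext_neg b (by omega)
        simp [h0]
end
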